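/- arXiv:1512.08134 — 6 statements merged into one kernel-verified Lean document; each statement's English description precedes it below -/
import Mathlib

section
/- Let z₁,…,zₙ ∈ U(1) ⊂ ℂ (the unit circle) and w₁,…,wₙ > 0. Then min over z ∈ U(1) of ∑_{k=1}^n wₖ |z − zₖ| equals the minimum of the same expression over z ∈ {z₁,…,zₙ}. Moreover, if z ∈ U(1) is not among z₁,…,zₙ, then ∑_{k=1}^n wₖ |z − zₖ| is strictly greater than this minimum. -/
open Finset Real

lemma norm_exp_sub_exp' (c d : ℝ) :
    ‖Complex.exp ((c + d : ℝ) * Complex.I) - Complex.exp ((c - d : ℝ) * Complex.I)‖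
      = 2 * |Real.sin d| := by
  have h : Complex.exp ((c + d : ℝ) * Complex.I) - Complex.exp ((c - d : ℝ) * Complex.I)
      = Complex.exp ((c : ℝ) * Complex.I) * (2 * Real.sin d * Complex.I) := by
    rw [show ((c + d : ℝ) : ℂ) = (c : ℂ) + (d : ℂ) by push_cast; ring,
        show ((c - d : ℝ) : ℂ) = (c : ℂ) + ((-d : ℝ) : ℂ) by push_cast; ring,
        add_mul, add_mul, Complex.exp_add, Complex.exp_add, ← mul_sub]
    congr 1
    rw [Complex.exp_mul_I, Complex.exp_mul_I]
    push_cast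
    simp only [Complex.cos_neg, Complex.sin_neg]
    ring
  rw [h, norm_mul]
  simp [Complex.norm_exp_ofReal_mul_I, abs_mul,
    ← Complex.ofReal_sin, Complex.norm_real]

lemma norm_exp_sub_exp (a b : ℝ) :
    ‖Complex.exp ((a : ℝ) * Complex.I) - Complex.exp ((b : ℝ) * Complex.I)‖
      = 2 * |Real.sin ((a - b) / 2)| := by
  have := norm_exp_sub_exp' ((a + b) / 2) ((a - b) / 2)
  rw [show (a + b) / 2 + (a - b) / 2 = a by ring,
      show (a + b) / 2 - (a - b) / 2 = b by ring] at this
  exact this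

lemma abs_sin_midpoint {m : ℤ} {a b : ℝ}
    (ha : a ∈ Set.Icc ((m : ℝ) * π) ((m + 1 : ℝ) * π))
    (hb : b ∈ Set.Icc ((m : ℝ) * π) ((m + 1 : ℝ) * π)) (hab : a ≠ b) :
    (|Real.sin a| + |Real.sin b|) / 2 < |Real.sin ((a + b) / 2)| := by
  obtain ⟨ha1, ha2⟩ := ha
  obtain ⟨hb1, hb2⟩ := hb
  have key : ∀ x : ℝ, (m : ℝ) * π ≤ x → x ≤ (m + 1 : ℝ) * π →
      |Real.sin x| = Real.sin (x - m * π) := by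
    intro x h1 h2
    have hx : x - m * π ∈ Set.Icc 0 π := by
      constructor <;> [linarith; nlinarith [Real.pi_pos]]
    have h3 := Real.sin_add_int_mul_pi (x - m * π) m
    rw [sub_add_cancel] at h3
    rw [h3, abs_mul]
    rcases Int.even_or_odd m with he | ho
    · rw [he.neg_one_zpow, abs_one, one_mul]
      exact abs_of_nonneg (Real.sin_nonneg_of_mem_Icc hx)
    · rw [ho.neg_one_zpow, abs_neg, abs_one, one_mul]
      exact abs_of_nonneg (Real.sin_nonneg_of_mem_Icc hx)
  have hm : (a + b) / 2 ∈ Set.Icc ((m : ℝ) * π) ((m + 1 : ℝ) * π) := by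
    constructor <;> linarith
  rw [key a ha1 ha2, key b hb1 hb2, key _ hm.1 hm.2]
  have ha' : a - m * π ∈ Set.Icc (0:ℝ) π := by
    constructor <;> [linarith; nlinarith [Real.pi_pos]]
  have hb' : b - m * π ∈ Set.Icc (0:ℝ) π := by
    constructor <;> [linarith; nlinarith [Real.pi_pos]]
  have hne : a - m * π ≠ b - m * π := by intro h; exact hab (by linarith)
  have := strictConcaveOn_sin_Icc.2 ha' hb' hne (by norm_num : (0:ℝ) < 1/2)
    (by norm_num : (0:ℝ) < 1/2) (by norm_num)
  simp only [smul_eq_mul] at this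
  rw [show (a + b) / 2 - m * π = 1/2 * (a - m*π) + 1/2 * (b - m*π) by ring]
  linarith

lemma core_lemma (n : ℕ) (hn : 0 < n)
    (z : Fin n → ℂ) (hz : ∀ k, ‖z k‖ = 1)
    (w : Fin n → ℝ) (hw : ∀ k, 0 < w k)
    (v : ℂ) (hv : ‖v‖ = 1)
    (hmin : ∀ u' : ℂ, ‖u'‖ = 1 →
      ∑ k, w k * ‖v - z k‖ ≤ ∑ k, w k * ‖u' - z k‖) :
    ∃ k, v = z k := by
  by_contra hne
  push_neg at hne
  have : Nonempty (Fin n) := ⟨⟨0, hn⟩⟩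
  set t : ℝ := v.arg with ht
  set θ : Fin n → ℝ := fun k => (z k).arg with hθ
  have hveq : v = Complex.exp ((t : ℝ) * Complex.I) := by
    have := Complex.norm_mul_exp_arg_mul_I v
    rw [show ‖v‖ = 1 by rw [hv]] at this
    simpa using this.symm
  have hzeq : ∀ k, z k = Complex.exp ((θ k : ℝ) * Complex.I) := by
    intro k
    have := Complex.norm_mul_exp_arg_mul_I (z k)
    rw [show ‖z k‖ = 1 by rw [hz k]] at this
    simpa using this.symm
  -- (t - θ k)/2 is never an integer multiple of π
  have hnm : ∀ k, ∀ m : ℤ, (t - θ k) / 2 ≠ (m : ℝ) * π := by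
    intro k m hEq
    apply hne k
    have htk : t = θ k + (m : ℝ) * (2 * π) := by
      have : t - θ k = (m : ℝ) * (2 * π) := by linarith
      linarith
    rw [hveq, hzeq k, htk]
    push_cast
    rw [add_mul, Complex.exp_add]
    have : Complex.exp (((m : ℤ) : ℂ) * (2 * ↑π) * Complex.I) = 1 := by
      have := Complex.exp_int_mul_two_pi_mul_I m
      rw [← this]; ring_nf
    rw [this, mul_one]
  set m : Fin n → ℤ := fun k => ⌊((t - θ k) / 2) / π⌋ with hm
  have hπ : (0 : ℝ) < π := Real.pi_pos
  have h1 : ∀ k, (m k : ℝ) * π < (t - θ k) / 2 := by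
    intro k
    rcases lt_or_eq_of_le ((le_div_iff₀ hπ).mp (Int.floor_le (((t - θ k) / 2) / π))) with h | h
    · exact h
    · exact absurd h.symm (hnm k (m k))
  have h2 : ∀ k, (t - θ k) / 2 < ((m k : ℝ) + 1) * π := by
    intro k
    exact (div_lt_iff₀ hπ).mp (Int.lt_floor_add_one (((t - θ k) / 2) / π))
  set g : Fin n → ℝ := fun k =>
    min ((t - θ k) / 2 - (m k : ℝ) * π) (((m k : ℝ) + 1) * π - (t - θ k) / 2) with hg
  have hgpos : ∀ k, 0 < g k := fun k => lt_min (by linarith [h1 k]) (by linarith [h2 k])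
  set ε : ℝ := Finset.univ.inf' Finset.univ_nonempty g with hε
  have hεpos : 0 < ε := (Finset.lt_inf'_iff _).mpr fun k _ => hgpos k
  have hεle : ∀ k, ε ≤ g k := fun k => Finset.inf'_le _ (Finset.mem_univ k)
  -- per-term strict inequality
  have hterm : ∀ k : Fin n,
      w k * ‖Complex.exp (((t - ε : ℝ)) * Complex.I) - z k‖
        + w k * ‖Complex.exp (((t + ε : ℝ)) * Complex.I) - z k‖
      < 2 * (w k * ‖v - z k‖) := by
    intro k
    have hl : ε ≤ (t - θ k) / 2 - (m k : ℝ) * π := le_trans (hεle k) (min_le_left _ _)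
    have hr : ε ≤ ((m k : ℝ) + 1) * π - (t - θ k) / 2 := le_trans (hεle k) (min_le_right _ _)
    have ha : (t - ε - θ k) / 2 ∈ Set.Icc ((m k : ℝ) * π) (((m k : ℝ) + 1) * π) := by
      constructor <;> [linarith; linarith]
    have hb : (t + ε - θ k) / 2 ∈ Set.Icc ((m k : ℝ) * π) (((m k : ℝ) + 1) * π) := by
      constructor <;> [linarith; linarith]
    have hab : (t - ε - θ k) / 2 ≠ (t + ε - θ k) / 2 := by intro hEq; nlinarith
    have key := abs_sin_midpoint ha hb hab
    rw [show ((t - ε - θ k) / 2 + (t + ε - θ k) / 2) / 2 = (t - θ k) / 2 by ring] at key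
    rw [hveq, hzeq k, norm_exp_sub_exp, norm_exp_sub_exp, norm_exp_sub_exp,
      show (t - ε - θ k) = t - ε - θ k by ring]
    have hwk := hw k
    nlinarith [key]
  have hsum := Finset.sum_lt_sum_of_nonempty Finset.univ_nonempty
    (fun k _ => hterm k)
  rw [Finset.sum_add_distrib] at hsum
  have hmul : ∑ k, 2 * (w k * ‖v - z k‖) = 2 * ∑ k, w k * ‖v - z k‖ := by
    rw [Finset.mul_sum]
  rw [hmul] at hsum
  have hA := hmin (Complex.exp (((t - ε : ℝ)) * Complex.I))
    (by rw [Complex.norm_exp_ofReal_mul_I])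
  have hB := hmin (Complex.exp (((t + ε : ℝ)) * Complex.I))
    (by rw [Complex.norm_exp_ofReal_mul_I])
  linarith

/-- The minimum of `z ↦ ∑ k, w k * |z - z k|` over the unit circle is attained
at one of the points `z k`; and at any point of the circle distinct from all the
`z k`, the value is strictly larger than this minimum. -/
theorem circle_min_attained_at_points (n : ℕ) (hn : 0 < n)
    (z : Fin n → ℂ) (hz : ∀ k, ‖z k‖ = 1)
    (w : Fin n → ℝ) (hw : ∀ k, 0 < w k) :
    (∃ k0 : Fin n, ∀ u : ℂ, ‖u‖ = 1 →
        ∑ k, w k * ‖z k0 - z k‖ ≤ ∑ k, w k * ‖u - z k‖) ∧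
    (∀ u : ℂ, ‖u‖ = 1 → (∀ k, u ≠ z k) →
        ∃ k0 : Fin n,
          (∀ u' : ℂ, ‖u'‖ = 1 →
            ∑ k, w k * ‖z k0 - z k‖ ≤ ∑ k, w k * ‖u' - z k‖) ∧
          ∑ k, w k * ‖z k0 - z k‖ < ∑ k, w k * ‖u - z k‖) := by
  have hcont : Continuous (fun v : ℂ => ∑ k, w k * ‖v - z k‖) := by
    apply continuous_finset_sum
    intro k _
    exact continuous_const.mul ((continuous_id.sub continuous_const).norm)
  have hcpt : IsCompact (Metric.sphere (0 : ℂ) 1) := isCompact_sphere 0 1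
  have hsph : (Metric.sphere (0 : ℂ) 1).Nonempty := ⟨1, by simp⟩
  obtain ⟨u0, hu0mem, hu0min⟩ := hcpt.exists_isMinOn hsph hcont.continuousOn
  have hu0norm : ‖u0‖ = 1 := by simpa using mem_sphere_zero_iff_norm.mp hu0mem
  have hu0min' : ∀ u' : ℂ, ‖u'‖ = 1 →
      ∑ k, w k * ‖u0 - z k‖ ≤ ∑ k, w k * ‖u' - z k‖ := by
    intro u' hu'
    exact hu0min (mem_sphere_zero_iff_norm.mpr hu')
  obtain ⟨k0, hk0⟩ := core_lemma n hn z hz w hw u0 hu0norm hu0min'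
  have hk0min : ∀ u' : ℂ, ‖u'‖ = 1 →
      ∑ k, w k * ‖z k0 - z k‖ ≤ ∑ k, w k * ‖u' - z k‖ := by
    intro u' hu'
    rw [← hk0]; exact hu0min' u' hu'
  refine ⟨⟨k0, hk0min⟩, ?_⟩
  intro u hu hune
  refine ⟨k0, hk0min, ?_⟩
  by_contra hle
  push_neg at hle
  have humin : ∀ u' : ℂ, ‖u'‖ = 1 →
      ∑ k, w k * ‖u - z k‖ ≤ ∑ k, w k * ‖u' - z k‖ := by
    intro u' hu'
    exact le_trans hle (hk0min u' hu')
  obtain ⟨k, hk⟩ := core_lemma n hn z hz w hw u hu humin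
  exact hune k hk
end

section
/- Decomposability of curvature-dimension inequalities: suppose the connection Laplacian decomposes as a direct sum Δ^σ = Δ^{σ₁} ⊕ ⋯ ⊕ Δ^{σ_r} corresponding to an orthogonal decomposition ℂ^d = U₁ ⊕ ⋯ ⊕ U_r invariant under the signature group. Then (G,μ,σ) satisfies CD^σ(K,n) if and only if (G,μ,σᵢ) satisfies CD^{σᵢ}(K,n) for every i = 1,…,r. -/
open Finset Matrix Complex ENNReal

noncomputable section

variable {V : Type*} [Fintype V] [DecidableEq V]
variable {n : Type*} [Fintype n] [DecidableEq n]

/-- Hermitian inner product `f^T conj(g)` on coordinate vectors. -/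
def hip (u v : n → ℂ) : ℂ := ∑ i, u i * (starRingEnd ℂ) (v i)

/-- The graph connection Laplacian. -/
def connLap (μ : V → ℝ) (w : V → V → ℝ) (σ : V → V → Matrix n n ℂ)
    (f : V → n → ℂ) (x : V) : n → ℂ :=
  (μ x)⁻¹ • ∑ y, w x y • (σ x y *ᵥ f y - f x)

/-- The scalar graph Laplacian (on complex-valued functions). -/
def gLap (μ : V → ℝ) (w : V → V → ℝ) (u : V → ℂ) (x : V) : ℂ :=
  ((μ x : ℝ) : ℂ)⁻¹ * ∑ y, ((w x y : ℝ) : ℂ) * (u y - u x)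

/-- The operator `Γ^σ`. -/
def GammaS (μ : V → ℝ) (w : V → V → ℝ) (σ : V → V → Matrix n n ℂ)
    (f g : V → n → ℂ) (x : V) : ℂ :=
  (1/2) * (gLap μ w (fun z => hip (f z) (g z)) x
    - hip (f x) (connLap μ w σ g x) - hip (connLap μ w σ f x) (g x))

/-- The operator `Γ₂^σ`. -/
def Gamma2S (μ : V → ℝ) (w : V → V → ℝ) (σ : V → V → Matrix n n ℂ)
    (f g : V → n → ℂ) (x : V) : ℂ :=
  (1/2) * (gLap μ w (GammaS μ w σ f g) x
    - GammaS μ w σ f (fun z => connLap μ w σ g z) x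
    - GammaS μ w σ (fun z => connLap μ w σ f z) g x)

/-- The curvature dimension inequality `CD^σ(K, N)`, with `N ∈ (0,∞]`. -/
def CD (μ : V → ℝ) (w : V → V → ℝ) (σ : V → V → Matrix n n ℂ)
    (K : ℝ) (N : ℝ≥0∞) : Prop :=
  ∀ (f : V → n → ℂ) (x : V),
    (Gamma2S μ w σ f f x).re ≥
      (N⁻¹).toReal * (hip (connLap μ w σ f x) (connLap μ w σ f x)).re
      + K * (GammaS μ w σ f f x).re


section Aux

variable {ι : Type*} [Fintype ι] [DecidableEq ι]
variable {dim : ι → Type*} [∀ i, Fintype (dim i)] [∀ i, DecidableEq (dim i)]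

lemma hip_sigma (u v : (Σ i, dim i) → ℂ) :
    hip u v = ∑ i, hip (fun k => u ⟨i, k⟩) (fun k => v ⟨i, k⟩) := by
  simp only [hip, ← Finset.univ_sigma_univ, Finset.sum_sigma]

lemma mulVec_blockDiagonal' (M : ∀ i, Matrix (dim i) (dim i) ℂ)
    (u : (Σ i, dim i) → ℂ) (i : ι) (v : dim i) :
    (Matrix.blockDiagonal' M *ᵥ u) ⟨i, v⟩ = ((M i) *ᵥ fun k => u ⟨i, k⟩) v := by
  simp only [Matrix.mulVec, dotProduct, ← Finset.univ_sigma_univ, Finset.sum_sigma]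
  rw [Finset.sum_eq_single i]
  · simp [Matrix.blockDiagonal'_apply_eq]
  · intro j _ hj
    apply Finset.sum_eq_zero
    intro k _
    rw [Matrix.blockDiagonal'_apply_ne _ _ _ (Ne.symm hj), zero_mul]
  · simp

lemma connLap_block (μ : V → ℝ) (w : V → V → ℝ)
    (σi : ∀ i, V → V → Matrix (dim i) (dim i) ℂ)
    (f : V → (Σ i, dim i) → ℂ) (x : V) (i : ι) (v : dim i) :
    connLap μ w (fun x y => Matrix.blockDiagonal' (fun j => σi j x y)) f x ⟨i, v⟩
      = connLap μ w (σi i) (fun z k => f z ⟨i, k⟩) x v := by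
  simp only [connLap, Pi.smul_apply, Finset.sum_apply, Pi.sub_apply, smul_eq_mul,
    mulVec_blockDiagonal']

end Aux
set_option linter.unusedSectionVars false

lemma gLap_sum (μ : V → ℝ) (w : V → V → ℝ) {ι : Type*} [Fintype ι]
    (h : ι → V → ℂ) (x : V) :
    gLap μ w (fun z => ∑ i, h i z) x = ∑ i, gLap μ w (h i) x := by
  simp only [gLap, Finset.mul_sum, ← Finset.sum_sub_distrib]
  rw [Finset.sum_comm]

section Aux2

variable {ι : Type*} [Fintype ι] [DecidableEq ι]
variable {dim : ι → Type*} [∀ i, Fintype (dim i)] [∀ i, DecidableEq (dim i)]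

lemma GammaS_block (μ : V → ℝ) (w : V → V → ℝ)
    (σi : ∀ i, V → V → Matrix (dim i) (dim i) ℂ)
    (f g : V → (Σ i, dim i) → ℂ) (x : V) :
    GammaS μ w (fun x y => Matrix.blockDiagonal' (fun j => σi j x y)) f g x
      = ∑ i, GammaS μ w (σi i) (fun z k => f z ⟨i, k⟩) (fun z k => g z ⟨i, k⟩) x := by
  simp only [GammaS]
  have h1 : (fun z => hip (f z) (g z))
      = fun z => ∑ i, hip (fun k => f z ⟨i, k⟩) (fun k => g z ⟨i, k⟩) := by
    funext z; exact hip_sigma _ _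
  rw [h1, gLap_sum]
  rw [hip_sigma (f x), hip_sigma _ (g x)]
  simp only [connLap_block]
  rw [← Finset.sum_sub_distrib, ← Finset.sum_sub_distrib, Finset.mul_sum]

lemma Gamma2S_block (μ : V → ℝ) (w : V → V → ℝ)
    (σi : ∀ i, V → V → Matrix (dim i) (dim i) ℂ)
    (f g : V → (Σ i, dim i) → ℂ) (x : V) :
    Gamma2S μ w (fun x y => Matrix.blockDiagonal' (fun j => σi j x y)) f g x
      = ∑ i, Gamma2S μ w (σi i) (fun z k => f z ⟨i, k⟩) (fun z k => g z ⟨i, k⟩) x := by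
  simp only [Gamma2S]
  have h1 : GammaS μ w (fun x y => Matrix.blockDiagonal' (fun j => σi j x y)) f g
      = fun z => ∑ i, GammaS μ w (σi i) (fun z k => f z ⟨i, k⟩) (fun z k => g z ⟨i, k⟩) z := by
    funext z; exact GammaS_block μ w σi f g z
  rw [h1, gLap_sum]
  rw [GammaS_block μ w σi f (fun z => connLap μ w (fun x y => Matrix.blockDiagonal' (fun j => σi j x y)) g z) x,
     GammaS_block μ w σi (fun z => connLap μ w (fun x y => Matrix.blockDiagonal' (fun j => σi j x y)) f z) g x]
  simp only [connLap_block]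
  rw [← Finset.sum_sub_distrib, ← Finset.sum_sub_distrib, Finset.mul_sum]

end Aux2

lemma hip_zero_left (v : n → ℂ) : hip (fun _ => 0) v = 0 := by simp [hip]

lemma connLap_zero (μ : V → ℝ) (w : V → V → ℝ) (σ : V → V → Matrix n n ℂ) (x : V) :
    connLap μ w σ (fun _ _ => 0) x = fun _ => 0 := by
  funext v
  simp [connLap, Matrix.mulVec, dotProduct]

lemma gLap_zero (μ : V → ℝ) (w : V → V → ℝ) (x : V) :
    gLap μ w (fun _ => 0) x = 0 := by simp [gLap]

lemma GammaS_zero_left (μ : V → ℝ) (w : V → V → ℝ) (σ : V → V → Matrix n n ℂ)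
    (g : V → n → ℂ) (x : V) : GammaS μ w σ (fun _ _ => 0) g x = 0 := by
  have hc := connLap_zero μ w σ
  simp only [GammaS, hip_zero_left]
  rw [gLap_zero]
  have : hip (connLap μ w σ (fun _ _ => 0) x) (g x) = 0 := by
    rw [hc x, hip_zero_left]
  rw [this]
  ring

lemma GammaS_zero_right (μ : V → ℝ) (w : V → V → ℝ) (σ : V → V → Matrix n n ℂ)
    (f : V → n → ℂ) (x : V) : GammaS μ w σ f (fun _ _ => 0) x = 0 := by
  have h0 : ∀ u : n → ℂ, hip u (fun _ => 0) = 0 := by intro u; simp [hip]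
  simp only [GammaS, h0]
  rw [gLap_zero]
  have : hip (f x) (connLap μ w σ (fun _ _ => 0) x) = 0 := by
    rw [connLap_zero, h0]
  rw [this]
  ring

lemma Gamma2S_zero (μ : V → ℝ) (w : V → V → ℝ) (σ : V → V → Matrix n n ℂ) (x : V) :
    Gamma2S μ w σ (fun _ _ => 0) (fun _ _ => 0) x = 0 := by
  have hg : GammaS μ w σ (fun _ _ => (0 : ℂ)) (fun _ _ => 0) = fun _ => 0 := by
    funext z; exact GammaS_zero_left μ w σ _ z
  simp only [Gamma2S, hg, GammaS_zero_left]
  rw [gLap_zero, GammaS_zero_right]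
  ring

/-- Decomposability of the curvature dimension inequality: if the signature is
block diagonal with respect to an orthogonal invariant decomposition, then
`CD^σ(K,n)` holds iff it holds for every component. -/
theorem CD_blockDiagonal_iff
    {ι : Type*} [Fintype ι] [DecidableEq ι]
    {dim : ι → Type*} [∀ i, Fintype (dim i)] [∀ i, DecidableEq (dim i)]
    (μ : V → ℝ) (w : V → V → ℝ)
    (σi : ∀ i, V → V → Matrix (dim i) (dim i) ℂ)
    (hμ : ∀ x, 0 < μ x)
    (hw_symm : ∀ x y, w x y = w y x)
    (hw_nn : ∀ x y, 0 ≤ w x y)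
    (hw_loop : ∀ x, w x x = 0)
    (hσu : ∀ i x y, σi i x y ∈ Matrix.unitaryGroup (dim i) ℂ)
    (hσs : ∀ i x y, σi i y x = (σi i x y)ᴴ)
    (K : ℝ) (N : ℝ≥0∞) (hN : 0 < N) :
    CD μ w (fun x y => Matrix.blockDiagonal' (fun i => σi i x y)) K N ↔
      ∀ i, CD μ w (σi i) K N := by
  constructor
  · intro h i g x
    set F : V → (Σ j, dim j) → ℂ :=
      fun z p => if hp : p.1 = i then g z (hp ▸ p.2) else 0 with hF
    have hFi : (fun z k => F z ⟨i, k⟩) = g := by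
      funext z k
      show dite _ _ _ = _
      rw [dif_pos rfl]
    have hFj : ∀ j, j ≠ i → (fun z k => F z ⟨j, k⟩) = fun _ _ => 0 := by
      intro j hj
      funext z k
      show dite _ _ _ = _
      rw [dif_neg hj]
    have key := h F x
    rw [Gamma2S_block, GammaS_block, hip_sigma] at key
    simp only [connLap_block] at key
    have e1 : ∑ j, Gamma2S μ w (σi j) (fun z k => F z ⟨j, k⟩) (fun z k => F z ⟨j, k⟩) x
        = Gamma2S μ w (σi i) g g x := by
      rw [Finset.sum_eq_single i]
      · rw [hFi]
      · intro j _ hj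
        rw [hFj j hj]
        exact Gamma2S_zero μ w (σi j) x
      · simp
    have e2 : ∑ j, GammaS μ w (σi j) (fun z k => F z ⟨j, k⟩) (fun z k => F z ⟨j, k⟩) x
        = GammaS μ w (σi i) g g x := by
      rw [Finset.sum_eq_single i]
      · rw [hFi]
      · intro j _ hj
        rw [hFj j hj]
        exact GammaS_zero_left μ w (σi j) _ x
      · simp
    have e3 : ∑ j, hip (fun k => connLap μ w (σi j) (fun z k => F z ⟨j, k⟩) x k)
          (fun k => connLap μ w (σi j) (fun z k => F z ⟨j, k⟩) x k)
        = hip (connLap μ w (σi i) g x) (connLap μ w (σi i) g x) := by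
      rw [Finset.sum_eq_single i]
      · rw [hFi]
      · intro j _ hj
        rw [hFj j hj, connLap_zero]
        simp [hip]
      · simp
    rw [e1, e2, e3] at key
    exact key
  · intro h f x
    rw [Gamma2S_block, GammaS_block, hip_sigma]
    simp only [connLap_block, Complex.re_sum]
    rw [Finset.mul_sum, Finset.mul_sum, ← Finset.sum_add_distrib]
    apply Finset.sum_le_sum
    intro j _
    exact h j (fun z k => f z ⟨j, k⟩) x
end
end

section
/- Curvature bounds lift down from covering graphs: if π: (G̃, μ̃, σ̃) → (G, μ, σ) is a covering map of finite weighted graphs with signatures (preserving edge weights, vertex measures and signatures, and mapping 1-balls bijectively onto 1-balls), and (G̃, μ̃, σ̃) satisfies CD^{σ̃}(K,n), then (G, μ, σ) satisfies CD^σ(K,n). -/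
open Finset Matrix Complex ENNReal

noncomputable section

variable {V : Type*} [Fintype V] [DecidableEq V]
variable {n : Type*} [Fintype n] [DecidableEq n]

/-- Sums of ball-supported pullbacks along a covering map agree with sums
downstairs. -/
lemma sum_cover {V W : Type*} [Fintype V] [Fintype W] {M : Type*}
    [AddCommMonoid M] [Module ℝ M]
    (w : V → V → ℝ) (w' : W → W → ℝ) (π : W → V) (z : W)
    (hb : ∀ y, w' z y ≠ 0 → w' z y = w (π z) (π y))
    (hinj : Set.InjOn π {y | y = z ∨ w' z y ≠ 0})
    (hlift : ∀ v, w (π z) v ≠ 0 → ∃ y, w' z y ≠ 0 ∧ π y = v)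
    (T : V → M) :
    ∑ y : W, w' z y • T (π y) = ∑ v : V, w (π z) v • T v := by
  rw [← Finset.sum_filter_of_ne (p := fun y => w' z y ≠ 0)
      (by intro y _ h hz; exact h (by simp [hz])),
      ← Finset.sum_filter_of_ne (p := fun v => w (π z) v ≠ 0)
      (by intro v _ h hz; exact h (by simp [hz]))]
  refine Finset.sum_bij (fun y _ => π y) ?_ ?_ ?_ ?_
  · intro y hy
    simp only [Finset.mem_filter, Finset.mem_univ, true_and] at hy ⊢
    rw [← hb y hy]; exact hy
  · intro a ha b hb'
    simp only [Finset.mem_filter, Finset.mem_univ, true_and] at ha hb'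
    exact fun h => hinj (Or.inr ha) (Or.inr hb') h
  · intro v hv
    simp only [Finset.mem_filter, Finset.mem_univ, true_and] at hv
    obtain ⟨y, hy, hπ⟩ := hlift v hv
    exact ⟨y, by simp [hy], hπ⟩
  · intro y hy
    simp only [Finset.mem_filter, Finset.mem_univ, true_and] at hy
    rw [hb y hy]

/-- Curvature bounds descend along covering maps: if the covering graph
`(W, μ', w', σ')` of `(V, μ, w, σ)` satisfies `CD^{σ̃}(K,n)`, then the base
graph satisfies `CD^σ(K,n)`.  The covering map `π` is surjective, preserves
vertex measures, maps the induced subgraph on every `1`-ball bijectively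
(preserving weights and signatures) onto the induced subgraph on the image
`1`-ball. -/
theorem CD_of_covering
    {W : Type*} [Fintype W] [DecidableEq W]
    (μ : V → ℝ) (w : V → V → ℝ) (σ : V → V → Matrix n n ℂ)
    (μ' : W → ℝ) (w' : W → W → ℝ) (σ' : W → W → Matrix n n ℂ)
    (hμ : ∀ x, 0 < μ x) (hw_symm : ∀ x y, w x y = w y x)
    (hw_nn : ∀ x y, 0 ≤ w x y) (hw_loop : ∀ x, w x x = 0)
    (hσu : ∀ x y, σ x y ∈ Matrix.unitaryGroup n ℂ)
    (hσs : ∀ x y, σ y x = (σ x y)ᴴ)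
    (hμ' : ∀ x, 0 < μ' x) (hw'_symm : ∀ x y, w' x y = w' y x)
    (hw'_nn : ∀ x y, 0 ≤ w' x y) (hw'_loop : ∀ x, w' x x = 0)
    (hσ'u : ∀ x y, σ' x y ∈ Matrix.unitaryGroup n ℂ)
    (hσ's : ∀ x y, σ' y x = (σ' x y)ᴴ)
    (π : W → V)
    (hsurj : Function.Surjective π)
    (hmeas : ∀ x : W, μ' x = μ (π x))
    (hball : ∀ x a b : W, (a = x ∨ w' x a ≠ 0) → (b = x ∨ w' x b ≠ 0) →
        w' a b = w (π a) (π b) ∧ σ' a b = σ (π a) (π b))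
    (hinj : ∀ x : W, Set.InjOn π {y | y = x ∨ w' x y ≠ 0})
    (hlift : ∀ x : W, ∀ v : V, w (π x) v ≠ 0 → ∃ y : W, w' x y ≠ 0 ∧ π y = v)
    (K : ℝ) (N : ℝ≥0∞) (hN : 0 < N)
    (hCD : CD μ' w' σ' K N) :
    CD μ w σ K N := by
  have hb : ∀ z y : W, w' z y ≠ 0 →
      w' z y = w (π z) (π y) ∧ σ' z y = σ (π z) (π y) :=
    fun z y h => hball z z y (Or.inl rfl) (Or.inr h)
  -- connection Laplacian commutes with pullback
  have hconn : ∀ (f : V → n → ℂ) (z : W),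
      connLap μ' w' σ' (f ∘ π) z = connLap μ w σ f (π z) := by
    intro f z
    unfold connLap
    rw [hmeas]
    congr 1
    have hcg : ∀ y : W, w' z y • ((σ' z y) *ᵥ (f ∘ π) y - (f ∘ π) z)
        = w' z y • ((σ (π z) (π y)) *ᵥ f (π y) - f (π z)) := by
      intro y
      by_cases h : w' z y = 0
      · simp [h]
      · rw [(hb z y h).2]; rfl
    rw [Finset.sum_congr rfl (fun y _ => hcg y)]
    exact sum_cover w w' π z (fun y h => (hb z y h).1) (hinj z) (hlift z)
      (fun v => σ (π z) v *ᵥ f v - f (π z))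
  -- scalar Laplacian commutes with pullback
  have hgl : ∀ (u : V → ℂ) (z : W),
      gLap μ' w' (u ∘ π) z = gLap μ w u (π z) := by
    intro u z
    unfold gLap
    rw [hmeas]
    congr 1
    have key := sum_cover w w' π z (fun y h => (hb z y h).1) (hinj z) (hlift z)
      (fun v => u v - u (π z))
    simpa [Complex.real_smul, Function.comp] using key
  -- Γ commutes with pullback
  have hGam : ∀ (f g : V → n → ℂ) (z : W),
      GammaS μ' w' σ' (f ∘ π) (g ∘ π) z = GammaS μ w σ f g (π z) := by
    intro f g z
    unfold GammaS
    rw [show (fun t => hip ((f ∘ π) t) ((g ∘ π) t))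
        = ((fun v => hip (f v) (g v)) ∘ π) from rfl, hgl, hconn, hconn]
    rfl
  -- Γ₂ commutes with pullback
  have hGam2 : ∀ (f : V → n → ℂ) (z : W),
      Gamma2S μ' w' σ' (f ∘ π) (f ∘ π) z = Gamma2S μ w σ f f (π z) := by
    intro f z
    unfold Gamma2S
    rw [show GammaS μ' w' σ' (f ∘ π) (f ∘ π) = (GammaS μ w σ f f) ∘ π from
        funext (fun t => hGam f f t), hgl,
        show (fun t => connLap μ' w' σ' (f ∘ π) t) = (connLap μ w σ f) ∘ π from
        funext (fun t => hconn f t), hGam, hGam]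
  intro f x
  obtain ⟨z, rfl⟩ := hsurj x
  have h := hCD (f ∘ π) z
  rw [hGam2, hconn, hGam] at h
  exact h
end
end

section
/- Semigroup characterization of CD^σ(K,∞), part (i)⇒(ii): if a finite weighted graph (G,μ,σ) satisfies Γ₂^σ(f)(x) ≥ K Γ^σ(f)(x) for all f: V → ℂ^d and x ∈ V, then for all f and all t ≥ 0, Γ^σ(P_t^σ f) ≤ e^{−2Kt} P_t(Γ^σ(f)) pointwise on V, where P_t^σ = e^{tΔ^σ} and P_t = e^{tΔ}. -/
open Finset Matrix Complex ENNReal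

noncomputable section

variable {V : Type*} [Fintype V] [DecidableEq V]
variable {n : Type*} [Fintype n] [DecidableEq n]

/-- The scalar graph Laplacian as a matrix. -/
def lapMat (μ : V → ℝ) (w : V → V → ℝ) : Matrix V V ℝ :=
  fun x y => (μ x)⁻¹ * (w x y - if x = y then ∑ z, w x z else 0)

/-- The connection Laplacian as a matrix (blockwise). -/
def connMat (μ : V → ℝ) (w : V → V → ℝ) (σ : V → V → Matrix n n ℂ) :
    Matrix (V × n) (V × n) ℂ :=
  fun p q => ((μ p.1 : ℝ) : ℂ)⁻¹ *
    (((w p.1 q.1 : ℝ) : ℂ) * σ p.1 q.1 p.2 q.2 -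
      if p = q then ((∑ y, w p.1 y : ℝ) : ℂ) else 0)

/-- The heat semigroup `P_t^σ = e^{tΔ^σ}` acting on vector fields. -/
def heatSg (μ : V → ℝ) (w : V → V → ℝ) (σ : V → V → Matrix n n ℂ)
    (t : ℝ) (f : V → n → ℂ) : V → n → ℂ :=
  fun x i =>
    (NormedSpace.exp ((t : ℂ) • connMat μ w σ) *ᵥ fun p => f p.1 p.2) (x, i)

namespace GradAux

set_option linter.unusedSectionVars false
set_option maxHeartbeats 1000000

/-- Entry evaluation as a linear map. -/
def entryLM (𝕜 : Type*) [Semiring 𝕜] {m m' : Type*} (i : m) (j : m') :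
    Matrix m m' 𝕜 →ₗ[𝕜] 𝕜 where
  toFun A := A i j
  map_add' _ _ := rfl
  map_smul' _ _ := rfl

/-- `A ↦ (A *ᵥ F) p` as a linear map. -/
def mvLM (𝕜 : Type*) [CommSemiring 𝕜] {m : Type*} [Fintype m] (F : m → 𝕜) (p : m) :
    Matrix m m 𝕜 →ₗ[𝕜] 𝕜 where
  toFun A := (A *ᵥ F) p
  map_add' A B := by simp [Matrix.add_mulVec]
  map_smul' c A := by simp [Matrix.smul_mulVec]

variable (μ : V → ℝ) (w : V → V → ℝ) (σ : V → V → Matrix n n ℂ)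

lemma connLap_apply (f : V → n → ℂ) (x : V) (i : n) :
    connLap μ w σ f x i = ((μ x : ℝ) : ℂ)⁻¹ *
      ∑ y, ((w x y : ℝ) : ℂ) * ((σ x y *ᵥ f y) i - f x i) := by
  simp [connLap, Finset.sum_apply, Pi.smul_apply, Complex.real_smul, Finset.mul_sum]

lemma connMat_mulVec (f : V → n → ℂ) (p : V × n) :
    (connMat μ w σ *ᵥ fun q => f q.1 q.2) p = connLap μ w σ f p.1 p.2 := by
  obtain ⟨x, i⟩ := p
  rw [connLap_apply]
  simp only [mulVec, dotProduct, connMat]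
  have h1 : ∀ q : V × n,
      ((μ x : ℝ) : ℂ)⁻¹ * (((w x q.1 : ℝ) : ℂ) * σ x q.1 i q.2 -
        if (x, i) = q then ((∑ y, w x y : ℝ) : ℂ) else 0) * f q.1 q.2
      = ((μ x : ℝ) : ℂ)⁻¹ * (((w x q.1 : ℝ) : ℂ) * σ x q.1 i q.2 * f q.1 q.2)
        - (if (x, i) = q then ((μ x : ℝ) : ℂ)⁻¹ * ((∑ y, w x y : ℝ) : ℂ) * f q.1 q.2 else 0) := by
    intro q; by_cases h : (x, i) = q <;> simp [h] <;> ring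
  rw [Finset.sum_congr rfl fun q _ => h1 q, Finset.sum_sub_distrib, Finset.sum_ite_eq]
  simp only [Finset.mem_univ, if_true]
  rw [Fintype.sum_prod_type]
  simp only [mulVec, dotProduct]
  have h2 : ∀ y, ((w x y : ℝ) : ℂ) * (∑ j, σ x y i j * f y j - f x i)
      = (∑ j, ((w x y : ℝ) : ℂ) * (σ x y i j * f y j)) - ((w x y : ℝ) : ℂ) * f x i := by
    intro y; rw [mul_sub, Finset.mul_sum]
  conv_rhs => rw [Finset.sum_congr rfl fun y _ => h2 y]
  rw [Finset.sum_sub_distrib, mul_sub]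
  congr 1
  · rw [Finset.mul_sum]
    refine Finset.sum_congr rfl fun y _ => ?_
    rw [Finset.mul_sum]
    exact Finset.sum_congr rfl fun j _ => by ring
  · rw [← Finset.sum_mul, ← Complex.ofReal_sum]; ring

lemma lapMat_mulVec (h : V → ℝ) (x : V) :
    (lapMat μ w *ᵥ h) x = (μ x)⁻¹ * ∑ y, w x y * (h y - h x) := by
  simp only [lapMat, mulVec, dotProduct]
  have : ∀ y, (μ x)⁻¹ * (w x y - if x = y then ∑ z, w x z else 0) * h y
      = (μ x)⁻¹ * (w x y * h y) - (if x = y then (μ x)⁻¹ * (∑ z, w x z) * h y else 0) := by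
    intro y; by_cases hxy : x = y <;> simp [hxy] <;> ring
  rw [Finset.sum_congr rfl fun y _ => this y, Finset.sum_sub_distrib, Finset.sum_ite_eq,
    Finset.mul_sum]
  simp only [Finset.mem_univ, if_true]
  rw [Finset.mul_sum, Finset.sum_mul, ← Finset.sum_sub_distrib]
  exact Finset.sum_congr rfl fun y _ => by ring

lemma gLap_re (u : V → ℂ) (x : V) :
    (gLap μ w u x).re = (μ x)⁻¹ * ∑ y, w x y * ((u y).re - (u x).re) := by
  rw [gLap, ← Complex.ofReal_inv, Complex.re_ofReal_mul, Complex.re_sum]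
  congr 1
  refine Finset.sum_congr rfl fun y _ => ?_
  rw [Complex.re_ofReal_mul, Complex.sub_re]

lemma lapMat_mulVec_re (u : V → ℂ) (x : V) :
    (lapMat μ w *ᵥ fun z => (u z).re) x = (gLap μ w u x).re := by
  rw [lapMat_mulVec, gLap_re]

lemma hip_negl (u v : n → ℂ) : hip (-u) v = -hip u v := by
  simp [hip, Finset.sum_neg_distrib]

lemma hip_negr (u v : n → ℂ) : hip u (-v) = -hip u v := by
  simp [hip, Finset.sum_neg_distrib]

lemma connLap_neg (h : V → n → ℂ) (x : V) :
    connLap μ w σ (fun y => -(h y)) x = -(connLap μ w σ h x) := by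
  funext i
  rw [Pi.neg_apply, connLap_apply, connLap_apply]
  simp only [Pi.neg_apply, Matrix.mulVec_neg]
  rw [← mul_neg, ← Finset.sum_neg_distrib]
  congr 1
  exact Finset.sum_congr rfl fun y _ => by ring

lemma gLap_neg (u : V → ℂ) (x : V) :
    gLap μ w (fun z => -(u z)) x = -(gLap μ w u x) := by
  rw [gLap, gLap, ← mul_neg, ← Finset.sum_neg_distrib]
  congr 1
  exact Finset.sum_congr rfl fun y _ => by ring

lemma GammaS_negl (u v : V → n → ℂ) (x : V) :
    GammaS μ w σ (fun y => -(u y)) v x = -(GammaS μ w σ u v x) := by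
  unfold GammaS
  have h1 : (fun z => hip ((fun y => -(u y)) z) (v z)) = fun z => -(hip (u z) (v z)) := by
    funext z; exact hip_negl (u z) (v z)
  rw [h1, gLap_neg, connLap_neg]
  simp only [hip_negl, hip_negr]
  ring

lemma GammaS_negr (u v : V → n → ℂ) (x : V) :
    GammaS μ w σ u (fun y => -(v y)) x = -(GammaS μ w σ u v x) := by
  unfold GammaS
  have h1 : (fun z => hip (u z) ((fun y => -(v y)) z)) = fun z => -(hip (u z) (v z)) := by
    funext z; exact hip_negr (u z) (v z)
  rw [h1, gLap_neg, connLap_neg]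
  simp only [hip_negl, hip_negr]
  ring

lemma gLap_add (a b : V → ℂ) (x : V) :
    gLap μ w (fun z => a z + b z) x = gLap μ w a x + gLap μ w b x := by
  unfold gLap
  rw [← mul_add, ← Finset.sum_add_distrib]
  congr 1
  exact Finset.sum_congr rfl fun y _ => by ring

/-- The key pointwise Bochner-type identity. -/
lemma key_identity (h : V → n → ℂ) (z : V) :
    (lapMat μ w *ᵥ fun y => (GammaS μ w σ h h y).re) z
      + (GammaS μ w σ (fun y => -(connLap μ w σ h y)) h z
        + GammaS μ w σ h (fun y => -(connLap μ w σ h y)) z).re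
    = 2 * (Gamma2S μ w σ h h z).re := by
  rw [lapMat_mulVec_re, GammaS_negl, GammaS_negr, Gamma2S]
  rw [show ((1:ℂ)/2) = (((1:ℝ)/2 : ℝ) : ℂ) by norm_num, Complex.re_ofReal_mul]
  simp only [Complex.add_re, Complex.sub_re, Complex.neg_re]
  ring

-- derivative lemmas
lemma hasDerivAt_hip {s : ℝ} {u v : ℝ → n → ℂ} {u' v' : n → ℂ}
    (hu : ∀ i, HasDerivAt (fun r => u r i) (u' i) s)
    (hv : ∀ i, HasDerivAt (fun r => v r i) (v' i) s) :
    HasDerivAt (fun r => hip (u r) (v r)) (hip u' (v s) + hip (u s) v') s := by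
  have : hip u' (v s) + hip (u s) v'
      = ∑ i, (u' i * (starRingEnd ℂ) (v s i) + u s i * (starRingEnd ℂ) (v' i)) := by
    rw [hip, hip, ← Finset.sum_add_distrib]
  rw [this]
  unfold hip
  exact HasDerivAt.fun_sum fun i _ => ((hu i).mul ((hv i).star))

lemma hasDerivAt_connLap {s : ℝ} {u : ℝ → V → n → ℂ} {u' : V → n → ℂ}
    (hu : ∀ z i, HasDerivAt (fun r => u r z i) (u' z i) s) (x : V) (i : n) :
    HasDerivAt (fun r => connLap μ w σ (u r) x i) (connLap μ w σ u' x i) s := by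
  simp only [connLap_apply]
  refine HasDerivAt.const_mul _ (HasDerivAt.fun_sum fun y _ => HasDerivAt.const_mul _ ?_)
  simp only [mulVec, dotProduct]
  exact ((HasDerivAt.fun_sum fun j _ => (hu y j).const_mul _).sub (hu x i))

lemma hasDerivAt_gLap {s : ℝ} {u : ℝ → V → ℂ} {u' : V → ℂ}
    (hu : ∀ z, HasDerivAt (fun r => u r z) (u' z) s) (x : V) :
    HasDerivAt (fun r => gLap μ w (u r) x) (gLap μ w u' x) s := by
  unfold gLap
  exact HasDerivAt.const_mul _ (HasDerivAt.fun_sum fun y _ =>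
    HasDerivAt.const_mul _ ((hu y).sub (hu x)))

lemma hasDerivAt_GammaS {s : ℝ} {u v : ℝ → V → n → ℂ} {u' v' : V → n → ℂ}
    (hu : ∀ z i, HasDerivAt (fun r => u r z i) (u' z i) s)
    (hv : ∀ z i, HasDerivAt (fun r => v r z i) (v' z i) s) (x : V) :
    HasDerivAt (fun r => GammaS μ w σ (u r) (v r) x)
      (GammaS μ w σ u' (v s) x + GammaS μ w σ (u s) v' x) s := by
  have h1 : HasDerivAt (fun r => gLap μ w (fun z => hip (u r z) (v r z)) x)
      (gLap μ w (fun z => hip (u' z) (v s z) + hip (u s z) (v' z)) x) s :=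
    hasDerivAt_gLap μ w (fun z => hasDerivAt_hip (hu z) (hv z)) x
  have h2 : HasDerivAt (fun r => hip (u r x) (connLap μ w σ (v r) x))
      (hip (u' x) (connLap μ w σ (v s) x) + hip (u s x) (connLap μ w σ v' x)) s :=
    hasDerivAt_hip (hu x) (hasDerivAt_connLap μ w σ hv x)
  have h3 : HasDerivAt (fun r => hip (connLap μ w σ (u r) x) (v r x))
      (hip (connLap μ w σ u' x) (v s x) + hip (connLap μ w σ (u s) x) (v' x)) s :=
    hasDerivAt_hip (hasDerivAt_connLap μ w σ hu x) (hv x)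
  have h := (((h1.sub h2).sub h3).const_mul ((1:ℂ)/2))
  convert h using 1
  · rfl
  · rfl
  unfold GammaS
  rw [gLap_add]
  ring

-- matrix exponential lemmas
lemma hasDerivAt_exp_entry (A : Matrix V V ℝ) (s : ℝ) (x z : V) :
    HasDerivAt (fun r : ℝ => NormedSpace.exp (r • A) x z)
      ((NormedSpace.exp (s • A) * A) x z) s := by
  letI : SeminormedRing (Matrix V V ℝ) := Matrix.linftyOpSemiNormedRing
  letI : NormedRing (Matrix V V ℝ) := Matrix.linftyOpNormedRing
  letI : NormedAlgebra ℝ (Matrix V V ℝ) := Matrix.linftyOpNormedAlgebra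
  have h : HasDerivAt (fun u : ℝ => NormedSpace.exp (u • A))
      (NormedSpace.exp (s • A) * A) s := hasDerivAt_exp_smul_const A s
  exact (LinearMap.toContinuousLinearMap (entryLM ℝ x z)).hasFDerivAt.comp_hasDerivAt s h

lemma exp_entry_nonneg (A : Matrix V V ℝ) (hA : ∀ x z, x ≠ z → 0 ≤ A x z)
    {s : ℝ} (hs : 0 ≤ s) (x z : V) :
    0 ≤ NormedSpace.exp (s • A) x z := by
  letI : SeminormedRing (Matrix V V ℝ) := Matrix.linftyOpSemiNormedRing
  letI : NormedRing (Matrix V V ℝ) := Matrix.linftyOpNormedRing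
  letI : NormedAlgebra ℝ (Matrix V V ℝ) := Matrix.linftyOpNormedAlgebra
  set c : ℝ := ∑ y, |s * A y y| with hc
  set B : Matrix V V ℝ := s • A + c • (1 : Matrix V V ℝ) with hB
  have hBnn : ∀ a b, 0 ≤ B a b := by
    intro a b
    by_cases hab : a = b
    · subst hab
      simp only [hB, Matrix.add_apply, Matrix.smul_apply, Matrix.one_apply_eq, smul_eq_mul,
        mul_one]
      have h1 : |s * A a a| ≤ c := Finset.single_le_sum (f := fun y => |s * A y y|)
        (fun y _ => abs_nonneg _) (Finset.mem_univ a)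
      have := neg_abs_le (s * A a a)
      linarith
    · simp only [hB, Matrix.add_apply, Matrix.smul_apply, Matrix.one_apply_ne hab, smul_eq_mul,
        mul_zero, add_zero]
      exact mul_nonneg hs (hA a b hab)
  have hBpow : ∀ k : ℕ, ∀ a b, 0 ≤ (B ^ k) a b := by
    intro k
    induction k with
    | zero => intro a b; by_cases hab : a = b <;> simp [pow_zero, Matrix.one_apply, hab]
    | succ k ih =>
      intro a b
      rw [pow_succ, Matrix.mul_apply]
      exact Finset.sum_nonneg fun y _ => mul_nonneg (ih a y) (hBnn y b)
  have hsplit : s • A = (-c) • (1 : Matrix V V ℝ) + B := by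
    rw [hB]; module
  have hcomm : Commute ((-c) • (1 : Matrix V V ℝ)) B :=
    ((Commute.one_left B).smul_left (-c))
  rw [hsplit, Matrix.exp_add_of_commute _ _ hcomm]
  have hexp1 : NormedSpace.exp ((-c) • (1 : Matrix V V ℝ))
      = Real.exp (-c) • (1 : Matrix V V ℝ) := by
    have h1 : ((-c) • (1 : Matrix V V ℝ)) = algebraMap ℝ (Matrix V V ℝ) (-c) := by
      rw [Algebra.algebraMap_eq_smul_one]
    erw [h1, ← NormedSpace.algebraMap_exp_comm, Algebra.algebraMap_eq_smul_one,
      Real.exp_eq_exp_ℝ]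
  rw [hexp1]
  have hEnn : ∀ a b, 0 ≤ NormedSpace.exp B a b := by
    intro a b
    have hsum : Summable fun k : ℕ => ((Nat.factorial k : ℝ)⁻¹) • B ^ k :=
      NormedSpace.expSeries_summable' B
    have heq := (LinearMap.toContinuousLinearMap (entryLM ℝ a b)).map_tsum hsum
    have h2 : NormedSpace.exp B a b
        = ∑' k : ℕ, ((Nat.factorial k : ℝ)⁻¹) * (B ^ k) a b := by
      rw [NormedSpace.exp_eq_tsum ℝ]
      exact heq
    rw [h2]
    exact tsum_nonneg fun k => mul_nonneg (by positivity) (hBpow k a b)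
  rw [smul_mul_assoc, one_mul, Matrix.smul_apply, smul_eq_mul]
  exact mul_nonneg (Real.exp_nonneg _) (hEnn x z)

lemma heatSg_eq (c : ℝ) (f : V → n → ℂ) (z : V) (i : n) :
    heatSg μ w σ c f z i
      = (NormedSpace.exp (c • connMat μ w σ) *ᵥ fun p => f p.1 p.2) (z, i) := by
  letI : SeminormedRing (Matrix (V × n) (V × n) ℂ) := Matrix.linftyOpSemiNormedRing
  letI : NormedRing (Matrix (V × n) (V × n) ℂ) := Matrix.linftyOpNormedRing
  letI : NormedAlgebra ℝ (Matrix (V × n) (V × n) ℂ) := Matrix.linftyOpNormedAlgebra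
  letI : NormedAlgebra ℂ (Matrix (V × n) (V × n) ℂ) := Matrix.linftyOpNormedAlgebra
  have h1 : ((c : ℂ) • connMat μ w σ) = c • connMat μ w σ := by
    rw [← algebraMap_smul ℂ c (connMat μ w σ), Complex.coe_algebraMap]
  rw [heatSg, h1]

lemma heatSg_zero (f : V → n → ℂ) (z : V) (i : n) :
    heatSg μ w σ 0 f z i = f z i := by
  have h0 : ((0:ℝ):ℂ) • connMat μ w σ = 0 := by norm_num
  rw [heatSg, h0, NormedSpace.exp_zero, Matrix.one_mulVec]

lemma hasDerivAt_heatSg (t s : ℝ) (f : V → n → ℂ) (z : V) (i : n) :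
    HasDerivAt (fun r : ℝ => heatSg μ w σ (t - r) f z i)
      (-(connLap μ w σ (heatSg μ w σ (t - s) f) z i)) s := by
  letI : SeminormedRing (Matrix (V × n) (V × n) ℂ) := Matrix.linftyOpSemiNormedRing
  letI : NormedRing (Matrix (V × n) (V × n) ℂ) := Matrix.linftyOpNormedRing
  letI : NormedAlgebra ℝ (Matrix (V × n) (V × n) ℂ) := Matrix.linftyOpNormedAlgebra
  letI : NormedAlgebra ℂ (Matrix (V × n) (V × n) ℂ) := Matrix.linftyOpNormedAlgebra
  set M := connMat μ w σ with hM
  set F : (V × n) → ℂ := fun p => f p.1 p.2 with hF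
  have h1 : HasDerivAt (fun u : ℝ => NormedSpace.exp (u • M))
      (NormedSpace.exp ((t - s) • M) * M) (t - s) := hasDerivAt_exp_smul_const M (t - s)
  have h2 : HasDerivAt (fun r : ℝ => t - r) (-1 : ℝ) s := by
    simpa using (hasDerivAt_id s).const_sub t
  have h3 : HasDerivAt (fun r : ℝ => NormedSpace.exp ((t - r) • M))
      ((-1 : ℝ) • (NormedSpace.exp ((t - s) • M) * M)) s := h1.scomp s h2
  have hφ := ((LinearMap.toContinuousLinearMap (mvLM ℂ F (z, i))).restrictScalars
      ℝ).hasFDerivAt.comp_hasDerivAt s h3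
  have hfun : (fun r : ℝ => ((LinearMap.toContinuousLinearMap (mvLM ℂ F (z, i))).restrictScalars ℝ)
        (NormedSpace.exp ((t - r) • M)))
      = fun r : ℝ => heatSg μ w σ (t - r) f z i := by
    funext r
    rw [heatSg_eq]
    rfl
  simp only [Function.comp_def] at hφ
  rw [hfun] at hφ
  convert hφ using 1
  show -(connLap μ w σ (heatSg μ w σ (t - s) f) z i)
      = (((-1 : ℝ) • (NormedSpace.exp ((t - s) • M) * M)) *ᵥ F) (z, i)
  have hcomm : Commute M (NormedSpace.exp ((t - s) • M)) :=
    ((Commute.refl M).smul_right (t - s)).exp_right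
  rw [neg_one_smul, Matrix.neg_mulVec, ← hcomm.eq, ← Matrix.mulVec_mulVec]
  have : (NormedSpace.exp ((t - s) • M) *ᵥ F) = fun q => heatSg μ w σ (t - s) f q.1 q.2 := by
    funext q
    rw [heatSg_eq]
  rw [this, Pi.neg_apply, hM, connMat_mulVec]
  rfl

lemma sum_swap_EL (E L : Matrix V V ℝ) (G : V → ℝ) (x : V) :
    ∑ z, (E * L) x z * G z = ∑ y, E x y * (L *ᵥ G) y := by
  simp only [Matrix.mul_apply, Matrix.mulVec, dotProduct, Finset.sum_mul, Finset.mul_sum]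
  rw [Finset.sum_comm]
  exact Finset.sum_congr rfl fun y _ => Finset.sum_congr rfl fun z _ => by ring

end GradAux

set_option maxHeartbeats 1000000 in
/-- Semigroup characterization of `CD^σ(K,∞)`, direction (i) ⇒ (ii):
`Γ₂^σ ≥ KΓ^σ` implies the gradient estimate
`Γ^σ(P_t^σ f) ≤ e^{-2Kt} P_t(Γ^σ(f))`. -/
theorem gradient_estimate_of_CD
    (μ : V → ℝ) (w : V → V → ℝ) (σ : V → V → Matrix n n ℂ)
    (hμ : ∀ x, 0 < μ x)
    (hw_symm : ∀ x y, w x y = w y x)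
    (hw_nn : ∀ x y, 0 ≤ w x y)
    (hw_loop : ∀ x, w x x = 0)
    (hσu : ∀ x y, σ x y ∈ Matrix.unitaryGroup n ℂ)
    (hσs : ∀ x y, σ y x = (σ x y)ᴴ)
    (K : ℝ)
    (hCD : ∀ (f : V → n → ℂ) (x : V),
      (Gamma2S μ w σ f f x).re ≥ K * (GammaS μ w σ f f x).re) :
    ∀ (f : V → n → ℂ) (t : ℝ), 0 ≤ t → ∀ x : V,
      (GammaS μ w σ (heatSg μ w σ t f) (heatSg μ w σ t f) x).re ≤
        Real.exp (-2 * K * t) *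
          (NormedSpace.exp (t • lapMat μ w) *ᵥ
            fun z => (GammaS μ w σ f f z).re) x := by
  intro f t ht x
  classical
  have hder : ∀ s : ℝ, HasDerivAt
      (fun r => Real.exp (-2*K*r) * ∑ z, NormedSpace.exp (r • lapMat μ w) x z *
        (GammaS μ w σ (heatSg μ w σ (t - r) f) (heatSg μ w σ (t - r) f) z).re)
      (Real.exp (-2*K*s) * ∑ z, NormedSpace.exp (s • lapMat μ w) x z *
        (2 * ((Gamma2S μ w σ (heatSg μ w σ (t - s) f) (heatSg μ w σ (t - s) f) z).re
          - K * (GammaS μ w σ (heatSg μ w σ (t - s) f) (heatSg μ w σ (t - s) f) z).re))) s := by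
    intro s
    have hg' : ∀ z i, HasDerivAt (fun r => heatSg μ w σ (t - r) f z i)
        ((fun y => -(connLap μ w σ (heatSg μ w σ (t - s) f) y)) z i) s := by
      intro z i
      exact GradAux.hasDerivAt_heatSg μ w σ t s f z i
    have hGam : ∀ z, HasDerivAt
        (fun r => (GammaS μ w σ (heatSg μ w σ (t - r) f) (heatSg μ w σ (t - r) f) z).re)
        ((GammaS μ w σ (fun y => -(connLap μ w σ (heatSg μ w σ (t - s) f) y))
            (heatSg μ w σ (t - s) f) z
          + GammaS μ w σ (heatSg μ w σ (t - s) f)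
            (fun y => -(connLap μ w σ (heatSg μ w σ (t - s) f) y)) z).re) s := by
      intro z
      have h := GradAux.hasDerivAt_GammaS μ w σ hg' hg' z
      exact Complex.reCLM.hasFDerivAt.comp_hasDerivAt s h
    have hS : HasDerivAt
        (fun r => ∑ z, NormedSpace.exp (r • lapMat μ w) x z *
          (GammaS μ w σ (heatSg μ w σ (t - r) f) (heatSg μ w σ (t - r) f) z).re)
        (∑ z, ((NormedSpace.exp (s • lapMat μ w) * lapMat μ w) x z *
            (GammaS μ w σ (heatSg μ w σ (t - s) f) (heatSg μ w σ (t - s) f) z).re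
          + NormedSpace.exp (s • lapMat μ w) x z *
            (GammaS μ w σ (fun y => -(connLap μ w σ (heatSg μ w σ (t - s) f) y))
                (heatSg μ w σ (t - s) f) z
              + GammaS μ w σ (heatSg μ w σ (t - s) f)
                (fun y => -(connLap μ w σ (heatSg μ w σ (t - s) f) y)) z).re)) s :=
      HasDerivAt.fun_sum fun z _ =>
        (GradAux.hasDerivAt_exp_entry (lapMat μ w) s x z).mul (hGam z)
    have hexp : HasDerivAt (fun r : ℝ => Real.exp (-2*K*r)) (Real.exp (-2*K*s) * (-2*K)) s := by
      have h0 : HasDerivAt (fun r : ℝ => -2*K*r) (-2*K) s := by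
        simpa using (hasDerivAt_id s).const_mul (-2*K)
      exact h0.exp
    have hψs := hexp.mul hS
    have heq : Real.exp (-2*K*s) * ∑ z, NormedSpace.exp (s • lapMat μ w) x z *
        (2 * ((Gamma2S μ w σ (heatSg μ w σ (t - s) f) (heatSg μ w σ (t - s) f) z).re
          - K * (GammaS μ w σ (heatSg μ w σ (t - s) f) (heatSg μ w σ (t - s) f) z).re))
        = Real.exp (-2*K*s) * (-2*K) * (∑ z, NormedSpace.exp (s • lapMat μ w) x z *
            (GammaS μ w σ (heatSg μ w σ (t - s) f) (heatSg μ w σ (t - s) f) z).re)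
          + Real.exp (-2*K*s) *
            (∑ z, ((NormedSpace.exp (s • lapMat μ w) * lapMat μ w) x z *
              (GammaS μ w σ (heatSg μ w σ (t - s) f) (heatSg μ w σ (t - s) f) z).re
            + NormedSpace.exp (s • lapMat μ w) x z *
              (GammaS μ w σ (fun y => -(connLap μ w σ (heatSg μ w σ (t - s) f) y))
                  (heatSg μ w σ (t - s) f) z
                + GammaS μ w σ (heatSg μ w σ (t - s) f)
                  (fun y => -(connLap μ w σ (heatSg μ w σ (t - s) f) y)) z).re)) := by
      have hpt : ∀ z, NormedSpace.exp (s • lapMat μ w) x z *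
          (2 * ((Gamma2S μ w σ (heatSg μ w σ (t - s) f) (heatSg μ w σ (t - s) f) z).re
            - K * (GammaS μ w σ (heatSg μ w σ (t - s) f) (heatSg μ w σ (t - s) f) z).re))
          = NormedSpace.exp (s • lapMat μ w) x z *
              ((lapMat μ w *ᵥ fun y =>
                (GammaS μ w σ (heatSg μ w σ (t - s) f) (heatSg μ w σ (t - s) f) y).re) z)
            + NormedSpace.exp (s • lapMat μ w) x z *
              (GammaS μ w σ (fun y => -(connLap μ w σ (heatSg μ w σ (t - s) f) y))
                  (heatSg μ w σ (t - s) f) z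
                + GammaS μ w σ (heatSg μ w σ (t - s) f)
                  (fun y => -(connLap μ w σ (heatSg μ w σ (t - s) f) y)) z).re
            + (-2*K) * (NormedSpace.exp (s • lapMat μ w) x z *
              (GammaS μ w σ (heatSg μ w σ (t - s) f) (heatSg μ w σ (t - s) f) z).re) := by
        intro z
        have hz := GradAux.key_identity μ w σ (heatSg μ w σ (t - s) f) z
        have hz2 : (Gamma2S μ w σ (heatSg μ w σ (t - s) f) (heatSg μ w σ (t - s) f) z).re
            = ((lapMat μ w *ᵥ fun y =>
                (GammaS μ w σ (heatSg μ w σ (t - s) f) (heatSg μ w σ (t - s) f) y).re) z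
              + (GammaS μ w σ (fun y => -(connLap μ w σ (heatSg μ w σ (t - s) f) y))
                  (heatSg μ w σ (t - s) f) z
                + GammaS μ w σ (heatSg μ w σ (t - s) f)
                  (fun y => -(connLap μ w σ (heatSg μ w σ (t - s) f) y)) z).re) / 2 := by
          linarith
        rw [hz2]
        ring
      rw [Finset.sum_congr rfl fun z _ => hpt z]
      rw [Finset.sum_add_distrib, Finset.sum_add_distrib]
      rw [← GradAux.sum_swap_EL (NormedSpace.exp (s • lapMat μ w)) (lapMat μ w)
        (fun y => (GammaS μ w σ (heatSg μ w σ (t - s) f) (heatSg μ w σ (t - s) f) y).re) x]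
      rw [← Finset.mul_sum]
      rw [Finset.sum_add_distrib]
      ring
    rw [heq]
    exact hψs
  have hcont : Continuous (fun r => Real.exp (-2*K*r) *
      ∑ z, NormedSpace.exp (r • lapMat μ w) x z *
        (GammaS μ w σ (heatSg μ w σ (t - r) f) (heatSg μ w σ (t - r) f) z).re) := by
    rw [continuous_iff_continuousAt]
    intro s
    exact (hder s).continuousAt
  have hmono : MonotoneOn (fun r => Real.exp (-2*K*r) *
      ∑ z, NormedSpace.exp (r • lapMat μ w) x z *
        (GammaS μ w σ (heatSg μ w σ (t - r) f) (heatSg μ w σ (t - r) f) z).re)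
      (Set.Icc 0 t) := by
    apply monotoneOn_of_deriv_nonneg (convex_Icc 0 t) hcont.continuousOn
    · intro s _
      exact (hder s).differentiableAt.differentiableWithinAt
    · intro s hs
      rw [interior_Icc] at hs
      rw [(hder s).deriv]
      apply mul_nonneg (Real.exp_nonneg _)
      apply Finset.sum_nonneg
      intro z _
      apply mul_nonneg
      · apply GradAux.exp_entry_nonneg
        · intro a b hab
          simp only [lapMat, if_neg hab, sub_zero]
          exact mul_nonneg (inv_nonneg.2 (hμ a).le) (hw_nn a b)
        · exact hs.1.le
      · have := hCD (heatSg μ w σ (t - s) f) z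
        linarith
  have h01 := hmono (Set.mem_Icc.mpr ⟨le_refl 0, ht⟩) (Set.mem_Icc.mpr ⟨ht, le_refl t⟩) ht
  simp only at h01
  have hψ0 : Real.exp (-2*K*0) * ∑ z, NormedSpace.exp ((0:ℝ) • lapMat μ w) x z *
      (GammaS μ w σ (heatSg μ w σ (t - 0) f) (heatSg μ w σ (t - 0) f) z).re
      = (GammaS μ w σ (heatSg μ w σ t f) (heatSg μ w σ t f) x).re := by
    rw [mul_zero, Real.exp_zero, one_mul, zero_smul, NormedSpace.exp_zero, sub_zero]
    simp [Matrix.one_apply, ite_mul]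
  have hψt : Real.exp (-2*K*t) * ∑ z, NormedSpace.exp (t • lapMat μ w) x z *
      (GammaS μ w σ (heatSg μ w σ (t - t) f) (heatSg μ w σ (t - t) f) z).re
      = Real.exp (-2 * K * t) *
        (NormedSpace.exp (t • lapMat μ w) *ᵥ fun z => (GammaS μ w σ f f z).re) x := by
    have hgt : heatSg μ w σ (t - t) f = f := by
      funext z i
      rw [sub_self]
      exact GradAux.heatSg_zero μ w σ f z i
    rw [hgt]
    congr 1
  rw [hψ0, hψt] at h01
  exact h01
end
end

section
/- Semigroup characterization of CD^σ(K,∞), part (ii)⇒(iii): if Γ^σ(P_t^σ f) ≤ e^{−2Kt} P_t(Γ^σ(f)) holds for all f: V → ℂ^d and t ≥ 0, then for all f and t ≥ 0, P_t(|f|²) − |P_t^σ f|² ≥ ((e^{2Kt} − 1)/K) Γ^σ(P_t^σ f), where (e^{2Kt}−1)/K is replaced by 2t when K = 0. -/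
open Finset Matrix Complex ENNReal

noncomputable section

variable {V : Type*} [Fintype V] [DecidableEq V]
variable {n : Type*} [Fintype n] [DecidableEq n]

theorem exp_entry_deriv_c {W : Type*} [Fintype W] [DecidableEq W]
    (A : Matrix W W ℂ) (p q : W) (s : ℝ) :
    HasDerivAt (fun r : ℝ => NormedSpace.exp ((r : ℂ) • A) p q)
      ((A * NormedSpace.exp ((s : ℂ) • A)) p q) s := by
  letI : SeminormedRing (Matrix W W ℂ) := Matrix.linftyOpSemiNormedRing
  letI : NormedRing (Matrix W W ℂ) := Matrix.linftyOpNormedRing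
  letI : NormedAlgebra ℝ (Matrix W W ℂ) := Matrix.linftyOpNormedAlgebra
  have key : ∀ r : ℝ, NormedSpace.exp ((r : ℂ) • A) = NormedSpace.exp (r • A) := by
    intro r
    rw [Complex.coe_smul]
  have h := hasDerivAt_exp_smul_const' (𝕂 := ℝ) A s
  let e : Matrix W W ℂ →L[ℝ] ℂ := LinearMap.toContinuousLinearMap
    { toFun := fun M => M p q, map_add' := fun _ _ => rfl, map_smul' := fun _ _ => rfl }
  have h2 := e.hasFDerivAt.comp_hasDerivAt s h
  simp only [key]
  exact h2

theorem connMat_mulVec (μ : V → ℝ) (w : V → V → ℝ) (σ : V → V → Matrix n n ℂ)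
    (g : V → n → ℂ) (x : V) (i : n) :
    (connMat μ w σ *ᵥ fun p => g p.1 p.2) (x, i) = connLap μ w σ g x i := by
  simp only [connMat, connLap, mulVec, dotProduct]
  rw [Fintype.sum_prod_type]
  simp only [Pi.smul_apply, Finset.sum_apply, Pi.sub_apply, Complex.real_smul,
    Prod.mk.injEq, ite_and, mul_sub, sub_mul, mul_ite, ite_mul, mul_zero, zero_mul,
    Finset.sum_sub_distrib, Finset.sum_ite_eq, Finset.mem_univ, if_true,
    mulVec, dotProduct, Finset.mul_sum, Finset.sum_mul, Complex.ofReal_sum]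
  simp only [Complex.ofReal_inv, mul_assoc]
  congr 1
  rw [Finset.sum_comm]
  simp [Finset.sum_ite_eq]

theorem hasDerivAt_heat (μ : V → ℝ) (w : V → V → ℝ) (σ : V → V → Matrix n n ℂ)
    (f : V → n → ℂ) (t s : ℝ) (z : V) (i : n) :
    HasDerivAt (fun r : ℝ => heatSg μ w σ (t - r) f z i)
      (-(connLap μ w σ (heatSg μ w σ (t - s) f) z i)) s := by
  have h1 : ∀ p : V × n,
      HasDerivAt (fun r : ℝ =>
          NormedSpace.exp (((t - r : ℝ) : ℂ) • connMat μ w σ) (z, i) p * f p.1 p.2)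
        (-((connMat μ w σ *
            NormedSpace.exp (((t - s : ℝ) : ℂ) • connMat μ w σ)) (z, i) p * f p.1 p.2)) s := by
    intro p
    have hin : HasDerivAt (fun r : ℝ => t - r) (-1 : ℝ) s := by
      simpa using (hasDerivAt_id s).const_sub t
    have h2 := (exp_entry_deriv_c (connMat μ w σ) (z, i) p (t - s)).scomp s hin
    have h3 := h2.mul_const (f p.1 p.2)
    refine h3.congr_deriv ?_
    simp [neg_one_smul]
  have hsum := HasDerivAt.fun_sum (u := Finset.univ) (x := s)
    (A := fun (p : V × n) (r : ℝ) =>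
      NormedSpace.exp (((t - r : ℝ) : ℂ) • connMat μ w σ) (z, i) p * f p.1 p.2)
    (A' := fun p => -((connMat μ w σ *
      NormedSpace.exp (((t - s : ℝ) : ℂ) • connMat μ w σ)) (z, i) p * f p.1 p.2))
    (fun p _ => h1 p)
  have hval : (∑ p : V × n, -((connMat μ w σ *
        NormedSpace.exp (((t - s : ℝ) : ℂ) • connMat μ w σ)) (z, i) p * f p.1 p.2))
      = -(connLap μ w σ (heatSg μ w σ (t - s) f) z i) := by
    rw [← connMat_mulVec μ w σ (heatSg μ w σ (t - s) f) z i]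
    rw [Finset.sum_neg_distrib]
    congr 1
    show _ = (connMat μ w σ *ᵥ (NormedSpace.exp (((t - s : ℝ) : ℂ) • connMat μ w σ) *ᵥ
      fun p => f p.1 p.2)) (z, i)
    rw [Matrix.mulVec_mulVec]
    rfl
  rw [← hval]
  exact hsum

theorem hasDerivAt_hip_re (μ : V → ℝ) (w : V → V → ℝ) (σ : V → V → Matrix n n ℂ)
    (f : V → n → ℂ) (t s : ℝ) (z : V) :
    HasDerivAt (fun r : ℝ =>
        (hip (heatSg μ w σ (t - r) f z) (heatSg μ w σ (t - r) f z)).re)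
      (-(hip (connLap μ w σ (heatSg μ w σ (t - s) f) z)
            (heatSg μ w σ (t - s) f z)).re
        - (hip (heatSg μ w σ (t - s) f z)
            (connLap μ w σ (heatSg μ w σ (t - s) f) z)).re) s := by
  have hterm : ∀ i : n, HasDerivAt (fun r : ℝ =>
        heatSg μ w σ (t - r) f z i * (starRingEnd ℂ) (heatSg μ w σ (t - r) f z i))
      (-(connLap μ w σ (heatSg μ w σ (t - s) f) z i) *
          (starRingEnd ℂ) (heatSg μ w σ (t - s) f z i)
        + heatSg μ w σ (t - s) f z i *
          (starRingEnd ℂ) (-(connLap μ w σ (heatSg μ w σ (t - s) f) z i))) s := by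
    intro i
    have hg := hasDerivAt_heat μ w σ f t s z i
    have hc : HasDerivAt (fun r : ℝ => (starRingEnd ℂ) (heatSg μ w σ (t - r) f z i))
        ((starRingEnd ℂ) (-(connLap μ w σ (heatSg μ w σ (t - s) f) z i))) s :=
      (Complex.conjCLE.toContinuousLinearMap.hasFDerivAt).comp_hasDerivAt s hg
    exact hg.mul hc
  have hsum := HasDerivAt.fun_sum (u := Finset.univ) (x := s) (fun i _ => hterm i)
  have hre := Complex.reCLM.hasFDerivAt.comp_hasDerivAt s hsum
  have hval : Complex.reCLM (∑ i : n,
      (-(connLap μ w σ (heatSg μ w σ (t - s) f) z i) *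
          (starRingEnd ℂ) (heatSg μ w σ (t - s) f z i)
        + heatSg μ w σ (t - s) f z i *
          (starRingEnd ℂ) (-(connLap μ w σ (heatSg μ w σ (t - s) f) z i))))
      = -(hip (connLap μ w σ (heatSg μ w σ (t - s) f) z)
            (heatSg μ w σ (t - s) f z)).re
        - (hip (heatSg μ w σ (t - s) f z)
            (connLap μ w σ (heatSg μ w σ (t - s) f) z)).re := by
    simp [hip, Complex.re_sum, Finset.sum_add_distrib, neg_mul, map_neg, mul_neg]
    ring
  rw [← hval]
  exact hre

theorem exp_entry_deriv (L : Matrix V V ℝ) (x z : V) (s : ℝ) :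
    HasDerivAt (fun r : ℝ => NormedSpace.exp (r • L) x z)
      ((NormedSpace.exp (s • L) * L) x z) s := by
  letI : SeminormedRing (Matrix V V ℝ) := Matrix.linftyOpSemiNormedRing
  letI : NormedRing (Matrix V V ℝ) := Matrix.linftyOpNormedRing
  letI : NormedAlgebra ℝ (Matrix V V ℝ) := Matrix.linftyOpNormedAlgebra
  have h := hasDerivAt_exp_smul_const (𝕂 := ℝ) L s
  let e : Matrix V V ℝ →L[ℝ] ℝ := LinearMap.toContinuousLinearMap
    { toFun := fun M => M x z, map_add' := fun _ _ => rfl, map_smul' := fun _ _ => rfl }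
  exact (e.hasFDerivAt.comp_hasDerivAt s h)

theorem lapMat_mulVec_re (μ : V → ℝ) (w : V → V → ℝ) (h : V → ℂ) (x : V) :
    (lapMat μ w *ᵥ fun z => (h z).re) x = (gLap μ w h x).re := by
  simp only [lapMat, gLap, mulVec, dotProduct, mul_sub, sub_mul, mul_ite, ite_mul,
    mul_zero, zero_mul, Finset.sum_sub_distrib, Finset.sum_ite_eq, Finset.mem_univ, if_true,
    Complex.sub_re, Complex.mul_re, Complex.ofReal_re, Complex.ofReal_im, Complex.inv_re,
    Finset.mul_sum, Finset.sum_mul]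
  simp only [Complex.re_sum, Complex.mul_re, Complex.ofReal_re, Complex.ofReal_im,
    Complex.inv_re, Complex.inv_im, zero_mul, mul_zero, sub_zero, zero_sub, zero_div,
    Complex.normSq_ofReal, neg_zero, neg_mul]
  congr 1 <;> apply Finset.sum_congr rfl <;> intro y _ <;>
    rcases eq_or_ne (μ x) 0 with h0 | h0 <;> field_simp [h0] <;> ring

theorem key_hasDerivAt (μ : V → ℝ) (w : V → V → ℝ) (σ : V → V → Matrix n n ℂ)
    (f : V → n → ℂ) (t : ℝ) (x : V) (s : ℝ) :
    HasDerivAt (fun r : ℝ =>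
        (NormedSpace.exp (r • lapMat μ w) *ᵥ
          fun z => (hip (heatSg μ w σ (t - r) f z) (heatSg μ w σ (t - r) f z)).re) x)
      (2 * (NormedSpace.exp (s • lapMat μ w) *ᵥ
          fun z => (GammaS μ w σ (heatSg μ w σ (t - s) f)
            (heatSg μ w σ (t - s) f) z).re) x) s := by
  classical
  set g : V → n → ℂ := heatSg μ w σ (t - s) f with hg
  have hsum := HasDerivAt.fun_sum (u := Finset.univ) (x := s)
    (A := fun (z : V) (r : ℝ) => NormedSpace.exp (r • lapMat μ w) x z *
      (hip (heatSg μ w σ (t - r) f z) (heatSg μ w σ (t - r) f z)).re)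
    (A' := fun z => (NormedSpace.exp (s • lapMat μ w) * lapMat μ w) x z *
        (hip (g z) (g z)).re
      + NormedSpace.exp (s • lapMat μ w) x z *
        (-(hip (connLap μ w σ g z) (g z)).re - (hip (g z) (connLap μ w σ g z)).re))
    (fun z _ => (exp_entry_deriv (lapMat μ w) x z s).mul
      (hasDerivAt_hip_re μ w σ f t s z))
  have hval : (∑ z : V, ((NormedSpace.exp (s • lapMat μ w) * lapMat μ w) x z *
        (hip (g z) (g z)).re
      + NormedSpace.exp (s • lapMat μ w) x z *
        (-(hip (connLap μ w σ g z) (g z)).re - (hip (g z) (connLap μ w σ g z)).re)))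
      = 2 * (NormedSpace.exp (s • lapMat μ w) *ᵥ
          fun z => (GammaS μ w σ g g z).re) x := by
    rw [Finset.sum_add_distrib]
    have e1 : (∑ z : V, (NormedSpace.exp (s • lapMat μ w) * lapMat μ w) x z *
          (hip (g z) (g z)).re)
        = ∑ z : V, NormedSpace.exp (s • lapMat μ w) x z *
          (gLap μ w (fun z' => hip (g z') (g z')) z).re := by
      have : (∑ z : V, (NormedSpace.exp (s • lapMat μ w) * lapMat μ w) x z *
            (hip (g z) (g z)).re)
          = ((NormedSpace.exp (s • lapMat μ w) * lapMat μ w) *ᵥ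
              fun z => (hip (g z) (g z)).re) x := rfl
      rw [this, ← Matrix.mulVec_mulVec]
      show (∑ z : V, NormedSpace.exp (s • lapMat μ w) x z *
        (lapMat μ w *ᵥ fun z' => (hip (g z') (g z')).re) z) = _
      exact Finset.sum_congr rfl fun z _ => by rw [lapMat_mulVec_re]
    rw [e1, ← Finset.sum_add_distrib]
    show _ = 2 * ∑ z : V, NormedSpace.exp (s • lapMat μ w) x z * (GammaS μ w σ g g z).re
    rw [Finset.mul_sum]
    apply Finset.sum_congr rfl
    intro z _
    have : (GammaS μ w σ g g z).re = (1/2) *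
        ((gLap μ w (fun z' => hip (g z') (g z')) z).re
          - (hip (g z) (connLap μ w σ g z)).re - (hip (connLap μ w σ g z) (g z)).re) := by
      simp [GammaS, Complex.mul_re, Complex.sub_re]
      try norm_num
      try ring
    rw [this]
    ring
  rw [← hval]
  exact hsum

theorem heatSg_zero' (μ : V → ℝ) (w : V → V → ℝ) (σ : V → V → Matrix n n ℂ)
    (f : V → n → ℂ) : heatSg μ w σ 0 f = f := by
  funext x i
  simp [heatSg, NormedSpace.exp_zero, Matrix.one_mulVec]

theorem heatSg_add' (μ : V → ℝ) (w : V → V → ℝ) (σ : V → V → Matrix n n ℂ)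
    (s r : ℝ) (f : V → n → ℂ) :
    heatSg μ w σ s (heatSg μ w σ r f) = heatSg μ w σ (s + r) f := by
  funext x i
  show (NormedSpace.exp ((s : ℂ) • connMat μ w σ) *ᵥ fun p =>
      (NormedSpace.exp ((r : ℂ) • connMat μ w σ) *ᵥ fun q => f q.1 q.2) p) (x, i) = _
  rw [Matrix.mulVec_mulVec, ← Matrix.exp_add_of_commute]
  · simp [heatSg, Complex.ofReal_add, add_smul]
  · exact (Commute.refl (connMat μ w σ)).smul_left _ |>.smul_right _

/-- Semigroup characterization of `CD^σ(K,∞)`, direction (ii) ⇒ (iii):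
the gradient estimate implies
`P_t(|f|²) - |P_t^σ f|² ≥ ((e^{2Kt}-1)/K) Γ^σ(P_t^σ f)`,
with `(e^{2Kt}-1)/K` replaced by `2t` when `K = 0`. -/
theorem variance_estimate_of_gradient_estimate
    (μ : V → ℝ) (w : V → V → ℝ) (σ : V → V → Matrix n n ℂ)
    (hμ : ∀ x, 0 < μ x)
    (hw_symm : ∀ x y, w x y = w y x)
    (hw_nn : ∀ x y, 0 ≤ w x y)
    (hw_loop : ∀ x, w x x = 0)
    (hσu : ∀ x y, σ x y ∈ Matrix.unitaryGroup n ℂ)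
    (hσs : ∀ x y, σ y x = (σ x y)ᴴ)
    (K : ℝ)
    (hgrad : ∀ (f : V → n → ℂ) (t : ℝ), 0 ≤ t → ∀ x : V,
      (GammaS μ w σ (heatSg μ w σ t f) (heatSg μ w σ t f) x).re ≤
        Real.exp (-2 * K * t) *
          (NormedSpace.exp (t • lapMat μ w) *ᵥ
            fun z => (GammaS μ w σ f f z).re) x) :
    ∀ (f : V → n → ℂ) (t : ℝ), 0 ≤ t → ∀ x : V,
      (NormedSpace.exp (t • lapMat μ w) *ᵥ
          fun z => (hip (f z) (f z)).re) x -
        (hip (heatSg μ w σ t f x) (heatSg μ w σ t f x)).re ≥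
      (if K = 0 then 2 * t else (Real.exp (2 * K * t) - 1) / K) *
        (GammaS μ w σ (heatSg μ w σ t f) (heatSg μ w σ t f) x).re := by
  intro f t ht x
  set C := (GammaS μ w σ (heatSg μ w σ t f) (heatSg μ w σ t f) x).re with hC
  set c : ℝ → ℝ := fun s => if K = 0 then 2 * s else (Real.exp (2 * K * s) - 1) / K with hc
  set F : ℝ → ℝ := fun s => (NormedSpace.exp (s • lapMat μ w) *ᵥ
      fun z => (hip (heatSg μ w σ (t - s) f z) (heatSg μ w σ (t - s) f z)).re) x with hF
  have hcd : ∀ s : ℝ, HasDerivAt c (2 * Real.exp (2 * K * s)) s := by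
    intro s
    by_cases hK : K = 0
    · have : c = fun s => 2 * s := by funext s; simp [hc, hK]
      rw [this, hK]
      simpa using (hasDerivAt_id s).const_mul (2 : ℝ)
    · have : c = fun s => (Real.exp (2 * K * s) - 1) / K := by funext s; simp [hc, hK]
      rw [this]
      have h1 : HasDerivAt (fun s : ℝ => 2 * K * s) (2 * K) s := by
        simpa using (hasDerivAt_id s).const_mul (2 * K)
      have h2 := ((h1.exp).sub_const 1).div_const K
      refine h2.congr_deriv ?_
      field_simp
  have hFd : ∀ s : ℝ, HasDerivAt F (2 * (NormedSpace.exp (s • lapMat μ w) *ᵥ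
      fun z => (GammaS μ w σ (heatSg μ w σ (t - s) f)
        (heatSg μ w σ (t - s) f) z).re) x) s :=
    fun s => key_hasDerivAt μ w σ f t x s
  have hbound : ∀ s : ℝ, 0 ≤ s →
      2 * Real.exp (2 * K * s) * C ≤ 2 * (NormedSpace.exp (s • lapMat μ w) *ᵥ
        fun z => (GammaS μ w σ (heatSg μ w σ (t - s) f)
          (heatSg μ w σ (t - s) f) z).re) x := by
    intro s hs
    have h1 := hgrad (heatSg μ w σ (t - s) f) s hs x
    rw [heatSg_add', show s + (t - s) = t by ring] at h1
    have hepos := Real.exp_pos (2 * K * s)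
    have h2 := mul_le_mul_of_nonneg_left h1 hepos.le
    rw [← mul_assoc, ← Real.exp_add, show 2 * K * s + -2 * K * s = 0 by ring,
      Real.exp_zero, one_mul] at h2
    linarith
  -- monotonicity of φ = F - C * c
  have hφd : ∀ s : ℝ, HasDerivAt (fun r => F r - C * c r)
      (2 * (NormedSpace.exp (s • lapMat μ w) *ᵥ
        fun z => (GammaS μ w σ (heatSg μ w σ (t - s) f)
          (heatSg μ w σ (t - s) f) z).re) x - C * (2 * Real.exp (2 * K * s))) s :=
    fun s => (hFd s).sub ((hcd s).const_mul C)
  have hmono : MonotoneOn (fun r => F r - C * c r) (Set.Icc 0 t) := by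
    apply monotoneOn_of_deriv_nonneg (convex_Icc 0 t)
    · exact fun s _ => (hφd s).continuousAt.continuousWithinAt
    · exact fun s _ => (hφd s).differentiableAt.differentiableWithinAt
    · intro s hs
      rw [interior_Icc] at hs
      rw [(hφd s).deriv]
      have := hbound s hs.1.le
      linarith
  have hkey := hmono (Set.left_mem_Icc.mpr ht) (Set.right_mem_Icc.mpr ht) ht
  have hc0 : c 0 = 0 := by by_cases hK : K = 0 <;> simp [hc, hK]
  have hF0 : F 0 = (hip (heatSg μ w σ t f x) (heatSg μ w σ t f x)).re := by
    simp [hF, NormedSpace.exp_zero, Matrix.one_mulVec]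
  have hFt : F t = (NormedSpace.exp (t • lapMat μ w) *ᵥ
      fun z => (hip (f z) (f z)).re) x := by
    simp [hF, heatSg_zero']
  simp only [] at hkey
  rw [hc0, hF0, hFt] at hkey
  rw [ge_iff_le]
  show c t * C ≤ _
  linarith
end
end

section
/- Lichnerowicz-type estimate: suppose a finite weighted graph (G,μ,σ) satisfies CD^σ(K,n), i.e., Γ₂^σ(f)(x) ≥ (1/n)|Δ^σ f(x)|² + K Γ^σ(f)(x) for all f and x. Then every nonzero eigenvalue λ^σ of −Δ^σ satisfies ((n−1)/n) λ^σ ≥ K (with the convention (n−1)/n = 1 for n = ∞). -/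
open Finset Matrix Complex ENNReal

noncomputable section

variable {V : Type*} [Fintype V] [DecidableEq V]
variable {n : Type*} [Fintype n] [DecidableEq n]

set_option linter.unusedSectionVars false
set_option linter.unusedVariables false

lemma hip_smul_left (r : ℝ) (u v : n → ℂ) : hip (r • u) v = r * hip u v := by
  simp [hip, Finset.mul_sum, mul_comm, mul_assoc, Complex.real_smul]
  ring_nf
  simp [mul_comm, mul_assoc, mul_left_comm]

lemma hip_smul_right (r : ℝ) (u v : n → ℂ) : hip u (r • v) = r * hip u v := by
  simp [hip, Finset.mul_sum, Complex.real_smul, _root_.map_mul, Complex.conj_ofReal]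
  ring_nf
  simp [mul_comm, mul_assoc, mul_left_comm]

lemma hip_sub_left (u v x : n → ℂ) : hip (u - v) x = hip u x - hip v x := by
  simp [hip, sub_mul, Finset.sum_sub_distrib]

lemma hip_sub_right (u v x : n → ℂ) : hip x (u - v) = hip x u - hip x v := by
  simp [hip, mul_sub, Finset.sum_sub_distrib]

lemma hip_self_re_nonneg (u : n → ℂ) : 0 ≤ (hip u u).re := by
  have : hip u u = ∑ i, (Complex.normSq (u i) : ℂ) := by
    simp [hip, Complex.mul_conj]
  rw [this]
  simp only [Complex.re_sum, Complex.ofReal_re]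
  exact Finset.sum_nonneg fun i _ => Complex.normSq_nonneg _

lemma hip_mulVec_left (A : Matrix n n ℂ) (u v : n → ℂ) :
    hip (A *ᵥ u) v = hip u (Aᴴ *ᵥ v) := by
  simp only [hip, Matrix.mulVec, dotProduct, Matrix.conjTranspose_apply,
    map_sum, _root_.map_mul, starRingEnd_apply, star_star, Finset.sum_mul, Finset.mul_sum]
  rw [Finset.sum_comm]
  congr 1; ext j; congr 1; ext i; ring

lemma hip_unitary (A : Matrix n n ℂ) (hA : A ∈ Matrix.unitaryGroup n ℂ) (u : n → ℂ) :
    hip (A *ᵥ u) (A *ᵥ u) = hip u u := by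
  rw [hip_mulVec_left, Matrix.mulVec_mulVec]
  have : Aᴴ * A = 1 := hA.1
  rw [this, Matrix.one_mulVec]

lemma gLap_smul (μ : V → ℝ) (w : V → V → ℝ) (c : ℂ) (u : V → ℂ) (x : V) :
    gLap μ w (fun z => c * u z) x = c * gLap μ w u x := by
  simp only [gLap, Finset.mul_sum]
  congr 1; ext y; ring

lemma gLap_congr (μ : V → ℝ) (w : V → V → ℝ) (u v : V → ℂ) (hu : ∀ z, u z = v z) (x : V) :
    gLap μ w u x = gLap μ w v x := by
  simp only [gLap]
  congr 1
  exact Finset.sum_congr rfl fun y _ => by rw [hu y, hu x]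

lemma connLap_smul (μ : V → ℝ) (w : V → V → ℝ) (σ : V → V → Matrix n n ℂ)
    (r : ℝ) (f : V → n → ℂ) (x : V) :
    connLap μ w σ (fun z => r • f z) x = r • connLap μ w σ f x := by
  simp only [connLap]
  rw [smul_comm]
  congr 1
  rw [Finset.smul_sum]
  congr 1; ext y
  rw [smul_comm, smul_sub, Matrix.mulVec_smul, smul_sub, smul_sub]

lemma sum_mu_gLap (μ : V → ℝ) (w : V → V → ℝ) (hμ : ∀ x, 0 < μ x)
    (hw_symm : ∀ x y, w x y = w y x) (u : V → ℂ) :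
    ∑ x, ((μ x : ℝ) : ℂ) * gLap μ w u x = 0 := by
  have h1 : ∀ x, ((μ x : ℝ) : ℂ) * gLap μ w u x = ∑ y, ((w x y : ℝ) : ℂ) * (u y - u x) := by
    intro x
    rw [gLap, ← mul_assoc, mul_inv_cancel₀ (by exact_mod_cast (hμ x).ne'), one_mul]
  simp only [h1]
  have h2 : ∑ x, ∑ y, ((w x y : ℝ) : ℂ) * (u y - u x)
      = ∑ x, ∑ y, ((w x y : ℝ) : ℂ) * u y - ∑ x, ∑ y, ((w x y : ℝ) : ℂ) * u x := by
    rw [← Finset.sum_sub_distrib]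
    congr 1; ext x
    rw [← Finset.sum_sub_distrib]
    congr 1; ext y; ring
  rw [h2]
  rw [Finset.sum_comm (f := fun x y => ((w x y : ℝ) : ℂ) * u y)]
  simp only [sub_eq_zero]
  congr 1; ext x; congr 1; ext y
  rw [hw_symm]

lemma hip_sum_right {s : Finset V} (u : n → ℂ) (v : V → n → ℂ) :
    hip u (∑ y ∈ s, v y) = ∑ y ∈ s, hip u (v y) := by
  simp only [hip, Finset.sum_apply, map_sum, Finset.mul_sum]
  rw [Finset.sum_comm]

lemma hip_sum_left {s : Finset V} (u : n → ℂ) (v : V → n → ℂ) :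
    hip (∑ y ∈ s, v y) u = ∑ y ∈ s, hip (v y) u := by
  simp only [hip, Finset.sum_apply, Finset.sum_mul]
  rw [Finset.sum_comm]

lemma GammaS_smul_right (μ : V → ℝ) (w : V → V → ℝ) (σ : V → V → Matrix n n ℂ)
    (r : ℝ) (f g : V → n → ℂ) (x : V) :
    GammaS μ w σ f (fun z => r • g z) x = r * GammaS μ w σ f g x := by
  simp only [GammaS]
  rw [gLap_congr μ w _ (fun z => (r : ℂ) * hip (f z) (g z))
    (fun z => by rw [hip_smul_right]) x, gLap_smul, connLap_smul]
  simp only [hip_smul_right, hip_smul_left]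
  ring

lemma GammaS_smul_left (μ : V → ℝ) (w : V → V → ℝ) (σ : V → V → Matrix n n ℂ)
    (r : ℝ) (f g : V → n → ℂ) (x : V) :
    GammaS μ w σ (fun z => r • f z) g x = r * GammaS μ w σ f g x := by
  simp only [GammaS]
  rw [gLap_congr μ w _ (fun z => (r : ℂ) * hip (f z) (g z))
    (fun z => by rw [hip_smul_left]) x, gLap_smul, connLap_smul]
  simp only [hip_smul_right, hip_smul_left]
  ring

lemma GammaS_self_eq (μ : V → ℝ) (w : V → V → ℝ) (σ : V → V → Matrix n n ℂ)
    (hσu : ∀ x y, σ x y ∈ Matrix.unitaryGroup n ℂ) (f : V → n → ℂ) (x : V) :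
    GammaS μ w σ f f x = (1/2) * ((μ x : ℂ))⁻¹ *
      ∑ y, ((w x y : ℝ) : ℂ) * hip (σ x y *ᵥ f y - f x) (σ x y *ᵥ f y - f x) := by
  simp only [GammaS, gLap, connLap]
  rw [hip_smul_right, hip_smul_left, hip_sum_right, hip_sum_left]
  have h1 : ∀ y, hip (f x) (w x y • (σ x y *ᵥ f y - f x))
      = ((w x y : ℝ) : ℂ) * (hip (f x) (σ x y *ᵥ f y) - hip (f x) (f x)) := by
    intro y; rw [hip_smul_right, hip_sub_right]
  have h2 : ∀ y, hip (w x y • (σ x y *ᵥ f y - f x)) (f x)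
      = ((w x y : ℝ) : ℂ) * (hip (σ x y *ᵥ f y) (f x) - hip (f x) (f x)) := by
    intro y; rw [hip_smul_left, hip_sub_left]
  simp only [h1, h2]
  push_cast
  have habc : ∀ (M A B C : ℂ), 1/2 * (M⁻¹ * A - M⁻¹ * B - M⁻¹ * C)
      = 1/2 * M⁻¹ * (A - B - C) := by intros; ring
  rw [habc, ← Finset.sum_sub_distrib, ← Finset.sum_sub_distrib]
  congr 1
  apply Finset.sum_congr rfl
  intro y _
  have h3 : hip (σ x y *ᵥ f y - f x) (σ x y *ᵥ f y - f x)
      = hip (f y) (f y) - hip (σ x y *ᵥ f y) (f x) - hip (f x) (σ x y *ᵥ f y)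
        + hip (f x) (f x) := by
    rw [hip_sub_left, hip_sub_right, hip_sub_right, hip_unitary _ (hσu x y)]
    ring
  rw [h3]
  ring

lemma hip_self_re_pos (u : n → ℂ) (hu : u ≠ 0) : 0 < (hip u u).re := by
  have h : hip u u = ∑ i, (Complex.normSq (u i) : ℂ) := by simp [hip, Complex.mul_conj]
  rw [h]
  simp only [Complex.re_sum, Complex.ofReal_re]
  obtain ⟨i, hi⟩ := Function.ne_iff.mp hu
  exact Finset.sum_pos' (fun j _ => Complex.normSq_nonneg _)
    ⟨i, Finset.mem_univ _, Complex.normSq_pos.mpr hi⟩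

lemma sum_mu_special (μ : V → ℝ) (w : V → V → ℝ) (hμ : ∀ x, 0 < μ x)
    (hw_symm : ∀ x y, w x y = w y x) (u v : V → ℂ) (c : ℂ)
    (h : ∀ x, v x = (1/2) * gLap μ w u x + c * u x) :
    ∑ x, ((μ x : ℝ) : ℂ) * v x = c * ∑ x, ((μ x : ℝ) : ℂ) * u x := by
  have h' : ∀ x, ((μ x : ℝ) : ℂ) * v x
      = (1/2) * (((μ x : ℝ) : ℂ) * gLap μ w u x) + c * (((μ x : ℝ) : ℂ) * u x) := by
    intro x; rw [h x]; ring
  simp only [h']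
  rw [Finset.sum_add_distrib, ← Finset.mul_sum, ← Finset.mul_sum,
    sum_mu_gLap μ w hμ hw_symm u, mul_zero, zero_add]

/-- Lichnerowicz-type estimate: under `CD^σ(K,n)`, every nonzero eigenvalue
`λ^σ` of `-Δ^σ` satisfies `((n-1)/n) λ^σ ≥ K` (with `(n-1)/n = 1` for
`n = ∞`). -/
theorem lichnerowicz_estimate
    (μ : V → ℝ) (w : V → V → ℝ) (σ : V → V → Matrix n n ℂ)
    (hμ : ∀ x, 0 < μ x)
    (hw_symm : ∀ x y, w x y = w y x)
    (hw_nn : ∀ x y, 0 ≤ w x y)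
    (hw_loop : ∀ x, w x x = 0)
    (hσu : ∀ x y, σ x y ∈ Matrix.unitaryGroup n ℂ)
    (hσs : ∀ x y, σ y x = (σ x y)ᴴ)
    (K : ℝ) (N : ℝ≥0∞) (hN : 0 < N)
    (hCD : CD μ w σ K N)
    (lam : ℝ) (hlam : lam ≠ 0)
    (ψ : V → n → ℂ) (hψ : ψ ≠ 0)
    (heig : ∀ x, connLap μ w σ ψ x = (-lam) • ψ x) :
    (1 - (N⁻¹).toReal) * lam ≥ K := by
  set t := (N⁻¹).toReal with ht
  -- pointwise form of Γ on the eigenfunction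
  have hGform : ∀ x, GammaS μ w σ ψ ψ x
      = (1/2) * gLap μ w (fun z => hip (ψ z) (ψ z)) x + (lam : ℂ) * hip (ψ x) (ψ x) := by
    intro x
    simp only [GammaS]
    rw [heig x, hip_smul_right, hip_smul_left]
    push_cast
    ring
  -- pointwise form of Γ₂ on the eigenfunction
  have hG2form : ∀ x, Gamma2S μ w σ ψ ψ x
      = (1/2) * gLap μ w (fun z => GammaS μ w σ ψ ψ z) x
        + (lam : ℂ) * GammaS μ w σ ψ ψ x := by
    intro x
    have hfun : (fun z => connLap μ w σ ψ z) = (fun z => (-lam) • ψ z) := funext heig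
    simp only [Gamma2S, hfun, GammaS_smul_right, GammaS_smul_left]
    have hg : gLap μ w (GammaS μ w σ ψ ψ) x
        = gLap μ w (fun z => GammaS μ w σ ψ ψ z) x := rfl
    rw [hg]
    push_cast
    ring
  -- the quantity P = ∑ μ |ψ|²
  set P : ℂ := ∑ x, ((μ x : ℝ) : ℂ) * hip (ψ x) (ψ x) with hP
  have hsum1 : ∑ x, ((μ x : ℝ) : ℂ) * GammaS μ w σ ψ ψ x = (lam : ℂ) * P :=
    sum_mu_special μ w hμ hw_symm _ _ _ hGform
  have hsum2 : ∑ x, ((μ x : ℝ) : ℂ) * Gamma2S μ w σ ψ ψ x = (lam : ℂ) * ((lam : ℂ) * P) := by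
    rw [sum_mu_special μ w hμ hw_symm _ _ _ hG2form, hsum1]
  -- real quantities
  set Er : ℝ := ∑ x, μ x * (hip (ψ x) (ψ x)).re with hEr
  have hPre : P.re = Er := by
    rw [hP, Complex.re_sum]
    exact Finset.sum_congr rfl fun x _ => by rw [Complex.re_ofReal_mul]
  have hG : ∑ x, μ x * (GammaS μ w σ ψ ψ x).re = lam * Er := by
    have := congrArg Complex.re hsum1
    rw [Complex.re_sum] at this
    simp only [Complex.re_ofReal_mul] at this
    rw [this, hPre]
  have hG2 : ∑ x, μ x * (Gamma2S μ w σ ψ ψ x).re = lam * (lam * Er) := by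
    have := congrArg Complex.re hsum2
    rw [Complex.re_sum] at this
    simp only [Complex.re_ofReal_mul] at this
    rw [this, hPre]
  -- Er > 0
  have hErpos : 0 < Er := by
    obtain ⟨x₀, hx₀⟩ := Function.ne_iff.mp hψ
    refine Finset.sum_pos' (fun x _ => mul_nonneg (hμ x).le (hip_self_re_nonneg _))
      ⟨x₀, Finset.mem_univ _, mul_pos (hμ x₀) (hip_self_re_pos _ hx₀)⟩
  -- Γ ≥ 0 pointwise
  have hGnn : ∀ x, 0 ≤ (GammaS μ w σ ψ ψ x).re := by
    intro x
    rw [GammaS_self_eq μ w σ hσu ψ x]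
    have : (1/2 : ℂ) * ((μ x : ℂ))⁻¹ = (((2 * μ x)⁻¹ : ℝ) : ℂ) := by
      push_cast
      ring
    rw [this, Complex.re_ofReal_mul, Complex.re_sum]
    apply mul_nonneg (by have := hμ x; positivity)
    apply Finset.sum_nonneg
    intro y _
    rw [Complex.re_ofReal_mul]
    exact mul_nonneg (hw_nn x y) (hip_self_re_nonneg _)
  -- λ > 0
  have hlampos : 0 < lam := by
    rcases lt_or_gt_of_ne hlam with h | h
    · exfalso
      have h1 : 0 ≤ ∑ x, μ x * (GammaS μ w σ ψ ψ x).re :=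
        Finset.sum_nonneg fun x _ => mul_nonneg (hμ x).le (hGnn x)
      rw [hG] at h1
      nlinarith
    · exact h
  -- |Δψ|² pointwise
  have hDD : ∀ x, (hip (connLap μ w σ ψ x) (connLap μ w σ ψ x)).re
      = lam * (lam * (hip (ψ x) (ψ x)).re) := by
    intro x
    rw [heig x, hip_smul_right, hip_smul_left]
    have : ((-lam : ℝ) : ℂ) * (((-lam : ℝ) : ℂ) * hip (ψ x) (ψ x))
        = ((lam : ℝ) : ℂ) * (((lam : ℝ) : ℂ) * hip (ψ x) (ψ x)) := by push_cast; ring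
    rw [this, Complex.re_ofReal_mul, Complex.re_ofReal_mul]
  -- sum the CD inequality
  have hmain : lam * (lam * Er) ≥ t * (lam * (lam * Er)) + K * (lam * Er) := by
    have hsumCD : ∑ x, μ x * (Gamma2S μ w σ ψ ψ x).re
        ≥ ∑ x, μ x * (t * (hip (connLap μ w σ ψ x) (connLap μ w σ ψ x)).re
            + K * (GammaS μ w σ ψ ψ x).re) :=
      Finset.sum_le_sum fun x _ => mul_le_mul_of_nonneg_left (hCD ψ x) (hμ x).le
    rw [hG2] at hsumCD
    have hrhs : ∑ x, μ x * (t * (hip (connLap μ w σ ψ x) (connLap μ w σ ψ x)).re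
        + K * (GammaS μ w σ ψ ψ x).re)
        = t * (lam * (lam * Er)) + K * (lam * Er) := by
      have hsplit : ∀ x, μ x * (t * (hip (connLap μ w σ ψ x) (connLap μ w σ ψ x)).re
          + K * (GammaS μ w σ ψ ψ x).re)
          = t * (lam * (lam * (μ x * (hip (ψ x) (ψ x)).re)))
            + K * (μ x * (GammaS μ w σ ψ ψ x).re) := by
        intro x; rw [hDD x]; ring
      simp only [hsplit]
      rw [Finset.sum_add_distrib]
      simp only [← Finset.mul_sum]
      rw [hG, ← hEr]
    rw [hrhs] at hsumCD
    exact hsumCD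
  -- conclude
  have hlamEr : 0 < lam * Er := mul_pos hlampos hErpos
  have hfin : K * (lam * Er) ≤ ((1 - t) * lam) * (lam * Er) := by nlinarith
  exact le_of_mul_le_mul_right hfin hlamEr
end
end
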